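/- arXiv:2601.07842 — 8 statements merged into one kernel-verified Lean document; each statement's English description precedes it below -/
import Mathlib

section
/- Let α ∈ (0, 3] and let h ∈ F(α). Then for all z ∈ 𝔻 one has Re(z·h''(z)/h'(z)) ≥ −α/2 + ((1 − |z|²)/(2α))·|h''(z)/h'(z)|². -/
/-! With `g z = z h''(z) / h'(z)` the hypothesis says `Re g > -α/2`, so `g / (g + α)` maps the
unit disk into itself and vanishes at `0`. Writing `g z = z q z` with `q = h'' / h'`, the Schwarz
lemma in divided form gives `‖q‖ ≤ ‖z q + α‖`; squaring and expanding this is the claim. -/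

open Complex Metric

/-- Membership in the family `F(α)`: `h` is analytic on the unit disk, normalized by
`h 0 = 0` and `h' 0 = 1`, locally univalent (`h' ≠ 0`), and satisfies
`Re (1 + z h''(z)/h'(z)) > 1 - α/2` on the unit disk. -/
def MemF (α : ℝ) (h : ℂ → ℂ) : Prop :=
  DifferentiableOn ℂ h (ball 0 1) ∧ h 0 = 0 ∧ deriv h 0 = 1 ∧
  (∀ z ∈ ball (0:ℂ) 1, deriv h z ≠ 0) ∧
  (∀ z ∈ ball (0:ℂ) 1, 1 - α / 2 < (1 + z * deriv (deriv h) z / deriv h z).re)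

theorem norm_le_div_of_mapsTo_ball_of_mul {ψ : ℂ → ℂ} {R₁ R₂ : ℝ} {z : ℂ}
    (hψ : DifferentiableOn ℂ ψ (ball 0 R₁))
    (hmaps : Set.MapsTo (fun w => w * ψ w) (ball 0 R₁) (closedBall 0 R₂)) (hz : z ∈ ball 0 R₁) :
    ‖ψ z‖ ≤ R₂ / R₁ := by
  have hdslope : dslope (fun w => w * ψ w) 0 z = ψ z := by
    rcases eq_or_ne z 0 with rfl | hz0
    · rw [dslope_same]
      simpa using ((hasDerivAt_id (0 : ℂ)).fun_mul
        (hψ.differentiableAt (isOpen_ball.mem_nhds hz)).hasDerivAt).deriv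
    · simpa using dslope_sub_smul_of_ne ψ hz0
  rw [← hdslope]
  exact norm_dslope_le_div_of_mapsTo_ball (differentiableOn_id.mul hψ) (by simpa using hmaps) hz

theorem norm_lt_norm_add_ofReal {α : ℝ} {w : ℂ} (hα : 0 < α) (hw : -(α / 2) < w.re) :
    ‖w‖ < ‖w + α‖ := by
  have hsq : ‖w‖ ^ 2 < ‖w + α‖ ^ 2 := by
    simp only [Complex.sq_norm, normSq_apply, add_re, add_im, ofReal_re, ofReal_im, add_zero]
    nlinarith
  exact lt_of_pow_lt_pow_left₀ 2 (norm_nonneg _) hsq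

theorem neg_half_add_le_re_of_norm_le_norm_mul_add {α : ℝ} {z q : ℂ} (hα : 0 < α)
    (hq : ‖q‖ ≤ ‖z * q + α‖) :
    -α / 2 + (1 - ‖z‖ ^ 2) / (2 * α) * ‖q‖ ^ 2 ≤ (z * q).re := by
  have hsq : ‖q‖ ^ 2 ≤ ‖z‖ ^ 2 * ‖q‖ ^ 2 + 2 * α * (z * q).re + α ^ 2 := by
    have h := pow_le_pow_left₀ (norm_nonneg _) hq 2
    rw [Complex.sq_norm (z * q + α), normSq_add, normSq_ofReal, ← Complex.sq_norm, norm_mul,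
      mul_pow, conj_ofReal, re_mul_ofReal] at h
    linarith
  rw [div_mul_eq_mul_div, div_add_div _ _ two_ne_zero (by positivity), div_le_iff₀ (by positivity)]
  nlinarith

theorem neg_half_add_le_re_mul_of_neg_half_lt_re {α : ℝ} {q : ℂ → ℂ} {z : ℂ} (hα : 0 < α)
    (hq : DifferentiableOn ℂ q (ball 0 1))
    (hre : ∀ w ∈ ball (0 : ℂ) 1, -(α / 2) < (w * q w).re) (hz : z ∈ ball 0 1) :
    -α / 2 + (1 - ‖z‖ ^ 2) / (2 * α) * ‖q z‖ ^ 2 ≤ (z * q z).re := by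
  have hlt : ∀ w ∈ ball (0 : ℂ) 1, ‖w * q w‖ < ‖w * q w + α‖ :=
    fun w hw => norm_lt_norm_add_ofReal hα (hre w hw)
  have hpos : ∀ w ∈ ball (0 : ℂ) 1, 0 < ‖w * q w + α‖ :=
    fun w hw => (norm_nonneg _).trans_lt (hlt w hw)
  have hψ : DifferentiableOn ℂ (fun w => q w / (w * q w + α)) (ball 0 1) :=
    hq.div ((differentiableOn_id.mul hq).add_const _) fun w hw => norm_pos_iff.1 (hpos w hw)
  have hmaps : Set.MapsTo (fun w => w * (q w / (w * q w + α))) (ball 0 1) (closedBall 0 1) := by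
    intro w hw
    beta_reduce
    rw [mem_closedBall_zero_iff, ← mul_div_assoc, norm_div, div_le_one (hpos w hw)]
    exact (hlt w hw).le
  have hschwarz := norm_le_div_of_mapsTo_ball_of_mul hψ hmaps hz
  rw [div_one, norm_div, div_le_one (hpos z hz)] at hschwarz
  exact neg_half_add_le_re_of_norm_le_norm_mul_add hα hschwarz

theorem stmt0 (α : ℝ) (hα : α ∈ Set.Ioc (0:ℝ) 3) (h : ℂ → ℂ) (hF : MemF α h) :
    ∀ z ∈ ball (0:ℂ) 1,
      -α / 2 + ((1 - ‖z‖ ^ 2) / (2 * α)) *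
          ‖deriv (deriv h) z / deriv h z‖ ^ 2
        ≤ (z * deriv (deriv h) z / deriv h z).re := by
  intro z hz
  obtain ⟨hh, -, -, hh', hre⟩ := hF
  have hh'_analytic := (hh.analyticOnNhd isOpen_ball).deriv
  have hq : DifferentiableOn ℂ (fun w => deriv (deriv h) w / deriv h w) (ball 0 1) :=
    hh'_analytic.deriv.differentiableOn.div hh'_analytic.differentiableOn hh'
  simp_rw [mul_div_assoc] at hre ⊢
  refine neg_half_add_le_re_mul_of_neg_half_lt_re hα.1 hq (fun w hw => ?_) hz
  linarith [add_re 1 (w * (deriv (deriv h) w / deriv h w)), one_re, hre w hw]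
end

section
/- Let α ∈ (0, 3] and let h ∈ F(α). If there exists a point z₀ ∈ 𝔻 at which equality holds in the inequality Re(z·h''(z)/h'(z)) ≥ −α/2 + ((1 − |z|²)/(2α))·|h''(z)/h'(z)|², then there exists ζ ∈ 𝕋 such that h'(z) = (1 − ζz)^{−α} for all z ∈ 𝔻. -/
open Complex Metric

/-!
Write `p = h'' / h'`. The hypothesis `Re (z p) > -α/2` says exactly that `z p / (α + z p)` maps
the disk into itself, so by the Schwarz lemma `ψ = p / (α + z p)` satisfies `‖ψ‖ ≤ 1`, and the
equality hypothesis at `z₀` is the identity `‖α + z₀ p(z₀)‖ = ‖p(z₀)‖`, i.e. `‖ψ(z₀)‖ = 1`.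
By the maximum modulus principle `ψ` is a unimodular constant `ζ`, which turns into the linear
ODE `h''(z) (1 - ζ z) = α ζ h'(z)`, whose solution with `h'(0) = 1` is `(1 - ζ z)^(-α)`.
-/

lemma norm_lt_norm_ofReal_add {a : ℝ} (ha : 0 < a) {t : ℂ} (ht : -(a / 2) < t.re) :
    ‖t‖ < ‖(a : ℂ) + t‖ := by
  rw [← sq_lt_sq₀ (norm_nonneg _) (norm_nonneg _)]
  simp only [Complex.sq_norm, normSq_apply, add_re, add_im, ofReal_re, ofReal_im]
  nlinarith

lemma norm_ofReal_add_mul_eq_norm {a : ℝ} (ha : a ≠ 0) {z p : ℂ}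
    (heq : (z * p).re = -a / 2 + (1 - ‖z‖ ^ 2) / (2 * a) * ‖p‖ ^ 2) :
    ‖(a : ℂ) + z * p‖ = ‖p‖ := by
  rw [← sq_eq_sq₀ (norm_nonneg _) (norm_nonneg _)]
  simp only [Complex.sq_norm, normSq_apply, add_re, add_im, mul_re, mul_im, ofReal_re,
    ofReal_im] at heq ⊢
  field_simp at heq
  linear_combination heq

lemma norm_le_one_of_norm_mul_le_one {ψ : ℂ → ℂ} (hψ : DifferentiableOn ℂ ψ (ball 0 1))
    (hle : ∀ z ∈ ball (0 : ℂ) 1, ‖z * ψ z‖ ≤ 1) {z : ℂ} (hz : z ∈ ball (0 : ℂ) 1) :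
    ‖ψ z‖ ≤ 1 := by
  have hdslope : dslope (fun x ↦ x * ψ x) 0 z = ψ z := by
    rcases eq_or_ne z 0 with rfl | hz0
    · rw [dslope_same]
      exact ((hasDerivAt_id' 0).mul
        (hψ.differentiableAt (isOpen_ball.mem_nhds hz)).hasDerivAt).deriv.trans (by simp)
    · simpa using dslope_sub_smul_of_ne ψ hz0
  have hmaps : Set.MapsTo (fun x ↦ x * ψ x) (ball 0 1) (closedBall (0 * ψ 0) 1) := fun x hx ↦ by
    simpa using hle x hx
  simpa [hdslope] using
    norm_dslope_le_div_of_mapsTo_ball (differentiableOn_id.fun_mul hψ) hmaps hz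

section

variable {α : ℝ} {p : ℂ → ℂ}

lemma ofReal_add_mul_ne_zero (hα : 0 < α) {z : ℂ} (hre : -(α / 2) < (z * p z).re) :
    (α : ℂ) + z * p z ≠ 0 :=
  norm_pos_iff.mp ((norm_nonneg _).trans_lt (norm_lt_norm_ofReal_add hα hre))

lemma differentiableOn_div_ofReal_add_mul (hα : 0 < α) (hp : DifferentiableOn ℂ p (ball 0 1))
    (hre : ∀ z ∈ ball (0 : ℂ) 1, -(α / 2) < (z * p z).re) :
    DifferentiableOn ℂ (fun z ↦ p z / (α + z * p z)) (ball 0 1) :=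
  hp.div ((differentiableOn_id.mul hp).const_add _) fun z hz ↦ ofReal_add_mul_ne_zero hα (hre z hz)

lemma norm_div_ofReal_add_mul_le_one (hα : 0 < α) (hp : DifferentiableOn ℂ p (ball 0 1))
    (hre : ∀ z ∈ ball (0 : ℂ) 1, -(α / 2) < (z * p z).re) {z : ℂ} (hz : z ∈ ball (0 : ℂ) 1) :
    ‖p z / (α + z * p z)‖ ≤ 1 := by
  refine norm_le_one_of_norm_mul_le_one (differentiableOn_div_ofReal_add_mul hα hp hre)
    (fun x hx ↦ ?_) hz
  rw [← mul_div_assoc, norm_div]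
  exact div_le_one_of_le₀ (norm_lt_norm_ofReal_add hα (hre x hx)).le (norm_nonneg _)

lemma exists_forall_mul_one_sub_eq_of_norm_eq_one (hα : 0 < α)
    (hp : DifferentiableOn ℂ p (ball 0 1))
    (hre : ∀ z ∈ ball (0 : ℂ) 1, -(α / 2) < (z * p z).re) {z₀ : ℂ}
    (hz₀ : z₀ ∈ ball (0 : ℂ) 1) (heq : ‖p z₀ / (α + z₀ * p z₀)‖ = 1) :
    ∃ ζ : ℂ, ‖ζ‖ = 1 ∧ ∀ z ∈ ball (0 : ℂ) 1, p z * (1 - ζ * z) = α * ζ := by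
  set ψ : ℂ → ℂ := fun z ↦ p z / (α + z * p z)
  have hmax : IsMaxOn (norm ∘ ψ) (ball 0 1) z₀ := isMaxOn_iff.mpr fun z hz ↦
    (norm_div_ofReal_add_mul_le_one hα hp hre hz).trans_eq heq.symm
  refine ⟨ψ z₀, heq, fun z hz ↦ ?_⟩
  have hψz : ψ z = ψ z₀ := eqOn_of_isPreconnected_of_isMaxOn_norm
    (convex_ball 0 1).isPreconnected isOpen_ball (differentiableOn_div_ofReal_add_mul hα hp hre)
    hz₀ hmax hz
  have hψ_mul : ψ z * (α + z * p z) = p z :=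
    div_mul_cancel₀ _ (ofReal_add_mul_ne_zero hα (hre z hz))
  rw [← hψz]
  linear_combination -hψ_mul

end

lemma eqOn_one_sub_mul_cpow_neg_of_deriv_mul_eq {A : ℂ → ℂ} {c ζ : ℂ} (hζ : ‖ζ‖ ≤ 1)
    (hA : DifferentiableOn ℂ A (ball 0 1)) (hA0 : A 0 = 1)
    (hode : ∀ z ∈ ball (0 : ℂ) 1, deriv A z * (1 - ζ * z) = c * ζ * A z) :
    Set.EqOn A (fun z ↦ (1 - ζ * z) ^ (-c)) (ball 0 1) := by
  have hslit : ∀ z ∈ ball (0 : ℂ) 1, 1 - ζ * z ∈ slitPlane := fun z hz ↦ by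
    refine ball_one_subset_slitPlane ?_
    rw [mem_ball_iff_norm, sub_sub_cancel_left, norm_neg, norm_mul]
    exact mul_lt_one_of_nonneg_of_lt_one_right hζ (norm_nonneg _) (mem_ball_zero_iff.mp hz)
  set g : ℂ → ℂ := fun z ↦ A z * (1 - ζ * z) ^ c
  have hg : ∀ z ∈ ball (0 : ℂ) 1, HasDerivAt g 0 z := fun z hz ↦ by
    have hb : HasDerivAt (fun y ↦ 1 - ζ * y) (-ζ) z := by
      simpa using ((hasDerivAt_id z).const_mul ζ).const_sub 1
    refine (((hA.differentiableAt (isOpen_ball.mem_nhds hz)).hasDerivAt).mul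
      (hb.cpow_const (c := c) (hslit z hz))).congr_deriv ?_
    have hpow : (1 - ζ * z) ^ c = (1 - ζ * z) ^ (c - 1) * (1 - ζ * z) := by
      simpa using cpow_add (c - 1) 1 (slitPlane_ne_zero (hslit z hz))
    rw [hpow]
    linear_combination (1 - ζ * z) ^ (c - 1) * hode z hz
  have hgconst : ∀ z ∈ ball (0 : ℂ) 1, g z = g 0 := fun z hz ↦
    isOpen_ball.is_const_of_deriv_eq_zero (convex_ball 0 1).isPreconnected
      (fun x hx ↦ (hg x hx).differentiableAt.differentiableWithinAt)
      (fun x hx ↦ (hg x hx).deriv) hz (mem_ball_self one_pos)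
  intro z hz
  have hgz : A z * (1 - ζ * z) ^ c = 1 := by simpa [g, hA0] using hgconst z hz
  exact (eq_inv_of_mul_eq_one_left hgz).trans (cpow_neg _ _).symm

theorem stmt1 (α : ℝ) (hα : α ∈ Set.Ioc (0:ℝ) 3) (h : ℂ → ℂ) (hF : MemF α h)
    (z₀ : ℂ) (hz₀ : z₀ ∈ ball (0:ℂ) 1)
    (heq : (z₀ * deriv (deriv h) z₀ / deriv h z₀).re
      = -α / 2 + ((1 - ‖z₀‖ ^ 2) / (2 * α)) *
          ‖deriv (deriv h) z₀ / deriv h z₀‖ ^ 2) :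
    ∃ ζ : ℂ, ‖ζ‖ = 1 ∧
      ∀ z ∈ ball (0:ℂ) 1, deriv h z = (1 - ζ * z) ^ (-(α : ℂ)) := by
  obtain ⟨hdiff, -, hA0, hA_ne, hre⟩ := hF
  have hα0 : 0 < α := hα.1
  have hA : AnalyticOnNhd ℂ (deriv h) (ball 0 1) := (hdiff.analyticOnNhd isOpen_ball).deriv
  set p : ℂ → ℂ := fun z ↦ deriv (deriv h) z / deriv h z
  have hp : DifferentiableOn ℂ p (ball 0 1) :=
    hA.deriv.differentiableOn.div hA.differentiableOn hA_ne
  have hpre : ∀ z ∈ ball (0 : ℂ) 1, -(α / 2) < (z * p z).re := fun z hz ↦ by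
    have := hre z hz
    rw [add_re, one_re, mul_div_assoc] at this
    linarith
  rw [mul_div_assoc] at heq
  have hnorm : ‖p z₀ / (α + z₀ * p z₀)‖ = 1 := by
    rw [norm_div, ← norm_ofReal_add_mul_eq_norm hα0.ne' heq,
      div_self (norm_ne_zero_iff.mpr (ofReal_add_mul_ne_zero hα0 (hpre z₀ hz₀)))]
  obtain ⟨ζ, hζ, hpζ⟩ := exists_forall_mul_one_sub_eq_of_norm_eq_one hα0 hp hpre hz₀ hnorm
  refine ⟨ζ, hζ, eqOn_one_sub_mul_cpow_neg_of_deriv_mul_eq hζ.le hA.differentiableOn hA0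
    fun z hz ↦ ?_⟩
  have hp_mul : p z * deriv h z = deriv (deriv h) z := div_mul_cancel₀ _ (hA_ne z hz)
  linear_combination deriv h z * hpζ z hz - (1 - ζ * z) * hp_mul
end

section
/- Let α ∈ (0, 3] and let h ∈ F(α). Then h' is subordinate to H_α(z) = (1 − z)^{−α}; that is, there exists an analytic function ω : 𝔻 → 𝔻 with ω(0) = 0 such that h'(z) = (1 − ω(z))^{−α} for all z ∈ 𝔻. -/
/-!
`h'` is zero-free with `h'(0) = 1`, so it has a holomorphic logarithm `g` with `g(0) = 0`; put
`v = -g / α` and `ω = 1 - exp v`. The hypothesis on `h` says `Re (z v') < 1/2`, that is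
`Re (z ω' / (1 - ω)) > -1/2`. If `|ω|` reached `1`, then at a point `z₀` of smallest modulus where
it does, Jack's lemma gives `z₀ ω'(z₀) = k ω(z₀)` with `k ≥ 1`, while `Re (w / (1 - w)) = -1/2` on
the unit circle: a contradiction. So `ω` maps the disc into itself, hence `Re (exp v) > 0`, and by
connectedness `|Im v| < π/2`. Therefore `Log (1 - ω) = v` and `(1 - ω)^(-α) = exp g = h'`.
-/

open Complex Metric

open Set Filter
open scoped Real ComplexConjugate

theorem exists_hasDerivAt_eq_mul_exp {f : ℂ → ℂ} {c : ℂ} {R : ℝ}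
    (hf : DifferentiableOn ℂ f (ball c R)) (hne : ∀ z ∈ ball c R, f z ≠ 0) :
    ∃ g : ℂ → ℂ, g c = 0 ∧ (∀ z ∈ ball c R, HasDerivAt g (deriv f z / f z) z) ∧
      ∀ z ∈ ball c R, f z = f c * exp (g z) := by
  have hf' : DifferentiableOn ℂ (deriv f) (ball c R) :=
    (hf.analyticOnNhd isOpen_ball).deriv.differentiableOn
  obtain ⟨g, hg0, hg⟩ := ((hf'.div hf hne).isExactOn_ball).with_val_at c 0
  refine ⟨g, hg0, hg, fun z hz => ?_⟩
  have hfd : ∀ z ∈ ball c R, HasDerivAt f (deriv f z) z := fun z hz =>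
    (hf.differentiableAt (isOpen_ball.mem_nhds hz)).hasDerivAt
  have hφ : ∀ z ∈ ball c R, HasDerivAt (fun w => f w * exp (-g w)) 0 z := fun z hz => by
    have hexp : HasDerivAt (fun w => exp (-g w)) (exp (-g z) * -(deriv f z / f z)) z :=
      (hg z hz).neg.cexp
    refine ((hfd z hz).mul hexp).congr_deriv ?_
    field_simp [hne z hz]
    ring
  have hconst := isOpen_ball.is_const_of_deriv_eq_zero (convex_ball c R).isPreconnected
    (fun w hw => (hφ w hw).differentiableAt.differentiableWithinAt)
    (fun w hw => (hφ w hw).deriv) hz (mem_ball_self (pos_of_mem_ball hz))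
  simp only [hg0, neg_zero, exp_zero, mul_one, exp_neg] at hconst
  rw [← hconst, mul_assoc, inv_mul_cancel₀ (exp_ne_zero _), mul_one]

theorem re_div_one_sub_eq_neg_half {w : ℂ} (hw : ‖w‖ = 1) (hw1 : w ≠ 1) :
    (w / (1 - w)).re = -(1 / 2) := by
  have hsq : w.re * w.re + w.im * w.im = 1 := by
    rw [← normSq_apply, normSq_eq_norm_sq, hw, one_pow]
  have hre : w.re ≠ 1 := fun h => hw1 (Complex.ext h (by rw [one_im]; nlinarith))
  rw [div_re, normSq_apply]
  simp only [sub_re, one_re, sub_im, one_im]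
  have : (1 - w.re) * (1 - w.re) + (0 - w.im) * (0 - w.im) = 2 * (1 - w.re) := by nlinarith
  rw [this]
  field_simp [sub_ne_zero.2 (Ne.symm hre)]
  nlinarith

theorem IsLocalMaxOn.hasDerivAt_nonneg_of_Iic {f : ℝ → ℝ} {f' a : ℝ}
    (h : IsLocalMaxOn f (Iic a) a) (hf : HasDerivAt f f' a) : 0 ≤ f' := by
  have := h.hasFDerivWithinAt_nonpos hf.hasFDerivAt.hasFDerivWithinAt
    (y := -1) (mem_posTangentConeAt_of_segment_subset ?_)
  · simpa using this
  · rw [segment_symm, segment_eq_Icc (by linarith)]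
    exact Icc_subset_Iic_self

theorem norm_le_norm_div_of_mapsTo_ball {ω : ℂ → ℂ} {r : ℝ} (hr : 0 < r)
    (hd : DifferentiableOn ℂ ω (ball 0 r)) (hc : ContinuousOn ω (closedBall 0 r))
    (hmaps : MapsTo ω (ball 0 r) (closedBall 0 1)) (h0 : ω 0 = 0) {z : ℂ} (hz : ‖z‖ ≤ r) :
    ‖ω z‖ ≤ ‖z‖ / r := by
  have hball : ∀ y ∈ ball (0:ℂ) r, ‖ω y‖ ≤ ‖y‖ / r := fun y hy => by
    have := dist_le_div_mul_dist_of_mapsTo_ball hd (by rwa [h0]) hy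
    rwa [h0, dist_zero_right, dist_zero_right, one_div_mul_eq_div] at this
  have hz' : z ∈ closure (ball (0:ℂ) r) := by
    rwa [closure_ball 0 hr.ne', mem_closedBall_zero_iff]
  refine ContinuousWithinAt.closure_le hz' ?_ (continuous_norm.div_const r).continuousWithinAt hball
  rw [closure_ball 0 hr.ne'] at hz'
  exact ((hc z hz').mono ball_subset_closedBall).norm

theorem exists_minimal_norm_of_one_le_norm {ω : ℂ → ℂ} (hc : ContinuousOn ω (ball 0 1))
    {z₁ : ℂ} (hz₁ : z₁ ∈ ball (0:ℂ) 1) (h1 : 1 ≤ ‖ω z₁‖) :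
    ∃ z₀ ∈ ball (0:ℂ) 1, 1 ≤ ‖ω z₀‖ ∧ ∀ z, ‖z‖ < ‖z₀‖ → ‖ω z‖ < 1 := by
  have hsub : closedBall (0:ℂ) ‖z₁‖ ⊆ ball 0 1 := closedBall_subset_ball (mem_ball_zero_iff.1 hz₁)
  set K := closedBall (0:ℂ) ‖z₁‖ ∩ {z | 1 ≤ ‖ω z‖}
  have hK : IsCompact K := (isCompact_closedBall 0 ‖z₁‖).of_isClosed_subset
    ((hc.mono hsub).norm.preimage_isClosed_of_isClosed isClosed_closedBall isClosed_Ici)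
    inter_subset_left
  obtain ⟨z₀, ⟨hz₀, hz₀ω⟩, hmin⟩ :=
    hK.exists_isMinOn ⟨z₁, mem_closedBall_zero_iff.2 le_rfl, h1⟩ continuous_norm.continuousOn
  refine ⟨z₀, hsub hz₀, hz₀ω, fun z hz => not_le.1 fun hωz => (not_le.2 hz) (hmin ?_)⟩
  exact ⟨mem_closedBall_zero_iff.2 (hz.le.trans (mem_closedBall_zero_iff.1 hz₀)), hωz⟩

theorem one_le_re_and_im_eq_zero_of_re_le_norm {φ : ℂ → ℂ} {c : ℂ} (hφ : HasDerivAt φ c 1)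
    (h1 : φ 1 = 1) (hle : ∀ s, ‖s‖ ≤ 1 → (φ s).re ≤ ‖s‖) : 1 ≤ c.re ∧ c.im = 0 := by
  constructor
  · have he : HasDerivAt (fun s => φ s - s) (c - 1) ((1:ℝ):ℂ) := by
      rw [ofReal_one]; exact hφ.sub (hasDerivAt_id _)
    have hmax : IsLocalMaxOn (fun t : ℝ => (φ t - t).re) (Iic 1) 1 := by
      filter_upwards [inter_mem_nhdsWithin (Iic 1) (Ioi_mem_nhds zero_lt_one)]
        with t ⟨ht1, ht0⟩
      have := hle t (by rwa [norm_real, Real.norm_of_nonneg ht0.out.le])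
      simp only [sub_re, ofReal_re, ofReal_one, h1, sub_self, zero_re, norm_real,
        Real.norm_of_nonneg ht0.out.le] at this ⊢
      linarith
    simpa using hmax.hasDerivAt_nonneg_of_Iic he.real_of_complex
  · have he : HasDerivAt (fun s => φ (exp (s * I))) (c * I) ((0:ℝ):ℂ) := by
      have hrot : HasDerivAt (fun s : ℂ => exp (s * I)) I ((0:ℝ):ℂ) := by
        simpa using ((hasDerivAt_id ((0:ℝ):ℂ)).mul_const I).cexp
      exact hφ.comp_of_eq (x := ((0:ℝ):ℂ)) hrot (by simp)
    have hmax : IsLocalMax (fun θ : ℝ => (φ (exp (θ * I))).re) 0 :=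
      Eventually.of_forall fun θ => by
        simpa [h1, norm_exp_ofReal_mul_I] using hle _ (norm_exp_ofReal_mul_I θ).le
    simpa using hmax.hasDerivAt_eq_zero he.real_of_complex

theorem jack_lemma {ω : ℂ → ℂ} {z₀ : ℂ} (hd : DifferentiableOn ℂ ω (ball 0 1))
    (hz₀ : z₀ ∈ ball (0:ℂ) 1) (h0 : ω 0 = 0) (hlt : ∀ z, ‖z‖ < ‖z₀‖ → ‖ω z‖ < 1)
    (hz₀ω : 1 ≤ ‖ω z₀‖) :
    ‖ω z₀‖ = 1 ∧ ∃ k : ℝ, 1 ≤ k ∧ z₀ * deriv ω z₀ = k * ω z₀ := by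
  set r := ‖z₀‖
  have hr : 0 < r := norm_pos_iff.2 fun h => by simp [h, h0] at hz₀ω; linarith
  have hsub : closedBall (0:ℂ) r ⊆ ball 0 1 := closedBall_subset_ball (mem_ball_zero_iff.1 hz₀)
  have hschwarz : ∀ z, ‖z‖ ≤ r → ‖ω z‖ ≤ ‖z‖ / r := fun z =>
    norm_le_norm_div_of_mapsTo_ball hr (hd.mono (ball_subset_closedBall.trans hsub))
      (hd.continuousOn.mono hsub)
      (fun z hz => mem_closedBall_zero_iff.2 (hlt z (mem_ball_zero_iff.1 hz)).le) h0
  have hw : ‖ω z₀‖ = 1 := le_antisymm ((hschwarz z₀ le_rfl).trans_eq (div_self hr.ne')) hz₀ω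
  have hww : conj (ω z₀) * ω z₀ = 1 := by
    rw [mul_comm, mul_conj, normSq_eq_norm_sq, hw]; norm_num
  have hφ : HasDerivAt (fun s => conj (ω z₀) * ω (s * z₀)) (conj (ω z₀) * (deriv ω z₀ * z₀)) 1 :=
    ((hd.differentiableAt (isOpen_ball.mem_nhds hz₀)).hasDerivAt.comp_of_eq (x := 1)
      ((hasDerivAt_id 1).mul_const z₀) (by simp)).const_mul _ |>.congr_deriv (by simp)
  obtain ⟨hre, him⟩ := one_le_re_and_im_eq_zero_of_re_le_norm hφ (by simpa using hww)
    fun s hs => calc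
      (conj (ω z₀) * ω (s * z₀)).re ≤ ‖conj (ω z₀) * ω (s * z₀)‖ := re_le_norm _
      _ = ‖ω (s * z₀)‖ := by rw [norm_mul, norm_conj, hw, one_mul]
      _ ≤ ‖s * z₀‖ / r := hschwarz _ (by rw [norm_mul]; exact mul_le_of_le_one_left hr.le hs)
      _ = ‖s‖ := by rw [norm_mul, mul_div_assoc, div_self hr.ne', mul_one]
  refine ⟨hw, _, hre, ?_⟩
  rw [show ((conj (ω z₀) * (deriv ω z₀ * z₀)).re : ℂ) = conj (ω z₀) * (deriv ω z₀ * z₀) from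
    Complex.ext (by simp) (by simp [him])]
  linear_combination -(z₀ * deriv ω z₀) * hww

theorem norm_lt_one_of_neg_half_lt_re {ω : ℂ → ℂ} (hd : DifferentiableOn ℂ ω (ball 0 1))
    (h0 : ω 0 = 0) (hne : ∀ z ∈ ball (0:ℂ) 1, ω z ≠ 1)
    (hre : ∀ z ∈ ball (0:ℂ) 1, -(1 / 2) < (z * deriv ω z / (1 - ω z)).re)
    {z : ℂ} (hz : z ∈ ball (0:ℂ) 1) : ‖ω z‖ < 1 := by
  by_contra! h1
  obtain ⟨z₀, hz₀, hz₀ω, hlt⟩ := exists_minimal_norm_of_one_le_norm hd.continuousOn hz h1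
  obtain ⟨hw, k, hk, hjack⟩ := jack_lemma hd hz₀ h0 hlt hz₀ω
  have := hre z₀ hz₀
  rw [hjack, mul_div_assoc, re_ofReal_mul, re_div_one_sub_eq_neg_half hw (hne z₀ hz₀)] at this
  nlinarith

theorem norm_one_sub_exp_lt_one_of_re_lt_half {v : ℂ → ℂ}
    (hd : DifferentiableOn ℂ v (ball 0 1)) (h0 : v 0 = 0)
    (hre : ∀ z ∈ ball (0:ℂ) 1, (z * deriv v z).re < 1 / 2) {z : ℂ} (hz : z ∈ ball (0:ℂ) 1) :
    ‖1 - exp (v z)‖ < 1 := by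
  have hderiv : ∀ z ∈ ball (0:ℂ) 1,
      HasDerivAt (fun z => 1 - exp (v z)) (-(exp (v z) * deriv v z)) z := fun z hz =>
    ((hd.differentiableAt (isOpen_ball.mem_nhds hz)).hasDerivAt.cexp).const_sub 1
  refine norm_lt_one_of_neg_half_lt_re
    (fun z hz => (hderiv z hz).differentiableAt.differentiableWithinAt) (by simp [h0])
    (fun z _ => by simp [exp_ne_zero]) (fun z hz => ?_) hz
  rw [(hderiv z hz).deriv, sub_sub_cancel, mul_neg, ← mul_assoc, mul_comm z, mul_assoc,
    neg_div, mul_div_cancel_left₀ _ (exp_ne_zero _), neg_re]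
  linarith [hre z hz]

theorem re_pos_of_norm_one_sub_lt_one {w : ℂ} (hw : ‖1 - w‖ < 1) : 0 < w.re := by
  have := (re_le_norm (1 - w)).trans_lt hw
  rw [sub_re, one_re] at this
  linarith

theorem abs_im_lt_pi_div_two_of_re_exp_pos {U : Set ℂ} {v : ℂ → ℂ} {z₀ : ℂ}
    (hU : IsPreconnected U) (hv : ContinuousOn v U) (hz₀ : z₀ ∈ U) (h₀ : |(v z₀).im| < π / 2)
    (hpos : ∀ z ∈ U, 0 < (exp (v z)).re) {z : ℂ} (hz : z ∈ U) : |(v z).im| < π / 2 := by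
  have him : ContinuousOn (fun z => (v z).im) U := continuous_im.comp_continuousOn hv
  have hcos : ∀ y ∈ U, Real.cos (v y).im ≠ 0 := fun y hy h => by
    have := hpos y hy
    rw [exp_re, h, mul_zero] at this
    exact lt_irrefl 0 this
  by_contra hge
  rcases le_abs'.1 (not_lt.1 hge) with hle | hle
  · obtain ⟨y, hy, hyv⟩ := hU.intermediate_value hz hz₀ him ⟨hle, by linarith [abs_lt.1 h₀]⟩
    exact hcos y hy (by simp only at hyv; rw [hyv, Real.cos_neg, Real.cos_pi_div_two])
  · obtain ⟨y, hy, hyv⟩ := hU.intermediate_value hz₀ hz him ⟨by linarith [abs_lt.1 h₀], hle⟩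
    exact hcos y hy (by simp only at hyv; rw [hyv, Real.cos_pi_div_two])

theorem stmt4 (α : ℝ) (hα : α ∈ Set.Ioc (0:ℝ) 3) (h : ℂ → ℂ) (hF : MemF α h) :
    ∃ ω : ℂ → ℂ, DifferentiableOn ℂ ω (ball 0 1) ∧ ω 0 = 0 ∧
      (∀ z ∈ ball (0:ℂ) 1, ω z ∈ ball (0:ℂ) 1) ∧
      (∀ z ∈ ball (0:ℂ) 1, deriv h z = (1 - ω z) ^ (-(α : ℂ))) := by
  obtain ⟨hd, -, hd1, hne, hre⟩ := hF
  have hα0 : (α : ℂ) ≠ 0 := ofReal_ne_zero.2 hα.1.ne'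
  obtain ⟨g, hg0, hg, hhg⟩ := exists_hasDerivAt_eq_mul_exp
    (hd.analyticOnNhd isOpen_ball).deriv.differentiableOn hne
  set v : ℂ → ℂ := fun z => -g z / α
  have hv : ∀ z ∈ ball (0:ℂ) 1, HasDerivAt v (-(deriv (deriv h) z / deriv h z) / α) z :=
    fun z hz => (hg z hz).neg.div_const _
  have hvd : DifferentiableOn ℂ v (ball 0 1) := fun z hz =>
    (hv z hz).differentiableAt.differentiableWithinAt
  have hv0 : v 0 = 0 := by simp [v, hg0]
  have hvre : ∀ z ∈ ball (0:ℂ) 1, (z * deriv v z).re < 1 / 2 := fun z hz => by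
    have := hre z hz
    rw [add_re, one_re, mul_div_assoc] at this
    rw [(hv z hz).deriv, mul_div_assoc', mul_neg, neg_div, neg_re, div_ofReal_re, neg_lt,
      lt_div_iff₀ hα.1]
    linarith
  have hω : ∀ z ∈ ball (0:ℂ) 1, ‖1 - exp (v z)‖ < 1 := fun z hz =>
    norm_one_sub_exp_lt_one_of_re_lt_half hvd hv0 hvre hz
  have him : ∀ z ∈ ball (0:ℂ) 1, |(v z).im| < π / 2 := fun z hz =>
    abs_im_lt_pi_div_two_of_re_exp_pos (convex_ball 0 1).isPreconnected hvd.continuousOn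
      (mem_ball_self one_pos) (by simp [hv0, Real.pi_pos])
      (fun z hz => re_pos_of_norm_one_sub_lt_one (hω z hz)) hz
  refine ⟨fun z => 1 - exp (v z), (differentiableOn_const 1).sub hvd.cexp, by simp [hv0],
    fun z hz => mem_ball_zero_iff.2 (hω z hz), fun z hz => ?_⟩
  obtain ⟨him_gt, him_lt⟩ := abs_lt.1 (him z hz)
  rw [sub_sub_cancel, cpow_def_of_ne_zero (exp_ne_zero _),
    log_exp (by linarith [Real.pi_pos]) (by linarith [Real.pi_pos]), hhg z hz, hd1, one_mul]
  congr 1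
  simp only [v]
  field_simp
end

section
/- Let α ∈ (0, 3], let m ≥ 1, and let f be analytic on 𝔻 with f(0) = 0, f'(0) = 1, f'(z) ≠ 0 on 𝔻, such that f''(z)/f'(z) = α·φ(z)/(1 − z·φ(z)) for all z ∈ 𝔻, where φ is a finite Blaschke product of degree m. Then there exist m + 1 pairwise distinct points ζ₁, …, ζ_{m+1} ∈ 𝕋 and real numbers t₁, …, t_{m+1} with 0 < t_k < 1 and t₁ + ⋯ + t_{m+1} = 1 such that f'(z) = ∏_{k=1}^{m+1} (1 − ζ_k z)^{−α t_k} for all z ∈ 𝔻. -/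
/-!
Write `φ = P / Q` with `P = l ∏ (z - bₖ)` and `Q = ∏ (1 - b̄ₖ z)`, so that `φ / (1 - z φ) = P / D`
with `D = Q - z P` of degree `m + 1`. Comparing `|z P|` with `|Q|` puts every root of `D` on the
circle, and at a root `w` one computes `D'(w) = -ρ(w) P(w)`, where
`ρ(w) = 1 + ∑ (1 - |bₖ|²) / |w - bₖ|² > 1` is the angular derivative of `z φ` at `w`. Hence the
roots are simple and the partial fraction decomposition of `P / D` (Lagrange interpolation of `P`
at the roots) reads `φ / (1 - z φ) = ∑ t_w w̄ / (1 - w̄ z)` with `t_w = 1 / ρ(w) ∈ (0, 1)`; the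
coefficient of `z ^ m` gives `∑ t_w = 1`. Finally `f'' / f' = α ∑ t_w w̄ / (1 - w̄ z)` integrates
to `f' = ∏ (1 - w̄ z) ^ (-α t_w)`.
-/

open Complex Metric

/-- `φ` is a finite Blaschke product of degree `m`: a unimodular constant times a product
of `m` Möbius factors `(z - bₖ)/(1 - conj bₖ · z)` with zeros `bₖ` in the unit disk. -/
def IsBlaschke (m : ℕ) (φ : ℂ → ℂ) : Prop :=
  ∃ (l : ℂ) (b : Fin m → ℂ), ‖l‖ = 1 ∧ (∀ k, b k ∈ ball (0:ℂ) 1) ∧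
    φ = fun z => l * ∏ k, (z - b k) / (1 - (starRingEnd ℂ) (b k) * z)

open ComplexConjugate Polynomial

theorem Polynomial.eval_derivative_finset_prod {F ι : Type*} [Field F] (s : Finset ι)
    (p : ι → F[X]) {x : F} (hx : ∀ i ∈ s, (p i).eval x ≠ 0) :
    (∏ i ∈ s, p i).derivative.eval x =
      (∏ i ∈ s, p i).eval x * ∑ i ∈ s, (p i).derivative.eval x / (p i).eval x := by
  classical
  rw [derivative_prod_finset, eval_finsetSum, Finset.mul_sum]
  refine Finset.sum_congr rfl fun i hi => ?_
  rw [eval_mul, eval_prod, eval_prod, ← Finset.mul_prod_erase s _ hi]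
  field_simp [hx i hi]

theorem Polynomial.nodup_roots_of_eval_derivative_ne_zero {R : Type*} [CommRing R] [IsDomain R]
    {p : R[X]} (hp : p ≠ 0) (h : ∀ x, p.IsRoot x → p.derivative.eval x ≠ 0) :
    p.roots.Nodup := by
  classical
  refine Multiset.nodup_iff_count_le_one.2 fun x => ?_
  rw [count_roots]
  by_contra! hx
  obtain ⟨hroot, hroot'⟩ := (one_lt_rootMultiplicity_iff_isRoot hp).1 hx
  exact h x hroot hroot'

section MobiusFactor

variable {b z : ℂ}

theorem normSq_one_sub_conj_mul_sub_normSq_sub (b z : ℂ) :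
    normSq (1 - conj b * z) - normSq (z - b) = (1 - normSq z) * (1 - normSq b) := by
  simp only [normSq_apply, sub_re, sub_im, mul_re, mul_im, conj_re, conj_im, one_re, one_im]
  ring

theorem one_sub_conj_mul_ne_zero (hb : ‖b‖ < 1) (hz : ‖z‖ ≤ 1) : 1 - conj b * z ≠ 0 := by
  refine sub_ne_zero.2 fun h => ?_
  have : ‖conj b * z‖ < 1 := by
    rw [norm_mul, norm_conj]
    exact mul_lt_one_of_nonneg_of_lt_one_left (norm_nonneg b) hb hz
  rw [← h, norm_one] at this
  exact this.false

theorem norm_sub_le_norm_one_sub_conj_mul (hb : ‖b‖ ≤ 1) (hz : ‖z‖ ≤ 1) :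
    ‖z - b‖ ≤ ‖1 - conj b * z‖ := by
  have key := normSq_one_sub_conj_mul_sub_normSq_sub b z
  rw [normSq_eq_norm_sq z, normSq_eq_norm_sq b] at key
  have hz' : 0 ≤ 1 - ‖z‖ ^ 2 := by nlinarith [norm_nonneg z]
  have hb' : 0 ≤ 1 - ‖b‖ ^ 2 := by nlinarith [norm_nonneg b]
  rw [← sq_le_sq₀ (norm_nonneg _) (norm_nonneg _), Complex.sq_norm, Complex.sq_norm]
  nlinarith [mul_nonneg hz' hb']

theorem norm_one_sub_conj_mul_lt_norm_sub (hb : ‖b‖ < 1) (hz : 1 < ‖z‖) :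
    ‖1 - conj b * z‖ < ‖z - b‖ := by
  have key := normSq_one_sub_conj_mul_sub_normSq_sub b z
  rw [normSq_eq_norm_sq z, normSq_eq_norm_sq b] at key
  have hz' : 0 < ‖z‖ ^ 2 - 1 := by nlinarith
  have hb' : 0 < 1 - ‖b‖ ^ 2 := by nlinarith [norm_nonneg b]
  rw [← sq_lt_sq₀ (norm_nonneg _) (norm_nonneg _), Complex.sq_norm, Complex.sq_norm]
  nlinarith [mul_pos hz' hb']

theorem sub_ne_zero_of_norm_eq_one (hb : ‖b‖ < 1) {w : ℂ} (hw : ‖w‖ = 1) : w - b ≠ 0 :=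
  sub_ne_zero.2 <| ne_of_apply_ne norm <| hw ▸ hb.ne'

/-- On the circle `1 - b̄ w = w · conj (w - b)`, which turns the left side into a Poisson kernel. -/
theorem conj_mul_div_one_sub_conj_mul_add_div_sub (hb : ‖b‖ < 1) {w : ℂ} (hw : ‖w‖ = 1) :
    conj b * w / (1 - conj b * w) + w / (w - b) = ((1 - normSq b) / normSq (w - b) : ℝ) := by
  have hwb := sub_ne_zero_of_norm_eq_one hb hw
  have hww : w * conj w = 1 := by rw [mul_conj, normSq_eq_norm_sq, hw]; norm_num
  have hfac : 1 - conj b * w = w * conj (w - b) := by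
    rw [map_sub, mul_sub, hww]; ring
  have hconj : conj (w - b) ≠ 0 := (_root_.map_ne_zero _).2 hwb
  have hw0 : w ≠ 0 := by rintro rfl; simp at hw
  rw [hfac, ofReal_div, ofReal_sub, ofReal_one, ← mul_conj, ← mul_conj (w - b)]
  field_simp
  rw [map_sub]
  linear_combination hww

end MobiusFactor

namespace Blaschke

variable {m : ℕ} (l : ℂ) (b : Fin m → ℂ)

noncomputable def num : ℂ[X] := C l * Lagrange.nodal Finset.univ b

noncomputable def den : ℂ[X] := ∏ k, (1 - C (conj (b k)) * X)

/-- The numerator of `1 - z φ(z)` for `φ = num / den`, so its roots solve `z φ(z) = 1`. -/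
noncomputable def levelPoly : ℂ[X] := den b - X * num l b

noncomputable def levelSet : Finset ℂ := (levelPoly l b).roots.toFinset

/-- For `‖w‖ = 1` this is `|(z φ(z))'|` at `w`; the summands are Poisson kernels. -/
noncomputable def angularDeriv (w : ℂ) : ℝ := 1 + ∑ k, (1 - normSq (b k)) / normSq (w - b k)

theorem eval_num (z : ℂ) : (num l b).eval z = l * ∏ k, (z - b k) := by
  rw [num, eval_mul, eval_C, Lagrange.eval_nodal]

theorem eval_den (z : ℂ) : (den b).eval z = ∏ k, (1 - conj (b k) * z) := by
  simp [den, eval_prod]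

theorem natDegree_num (hl : l ≠ 0) : (num l b).natDegree = m := by
  rw [num, natDegree_C_mul hl, Lagrange.natDegree_nodal, Finset.card_univ, Fintype.card_fin]

theorem leadingCoeff_num : (num l b).leadingCoeff = l := by
  rw [num, leadingCoeff_mul, leadingCoeff_C, Lagrange.nodal_monic.leadingCoeff, mul_one]

theorem natDegree_den_le : (den b).natDegree ≤ m := by
  have hfactor (c : ℂ) : (1 - C c * X).natDegree ≤ 1 := by compute_degree
  refine (natDegree_prod_le Finset.univ _).trans ?_
  simpa using Finset.sum_le_sum fun k (_ : k ∈ Finset.univ) => hfactor (conj (b k))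

theorem natDegree_X_mul_num (hl : l ≠ 0) : (X * num l b).natDegree = m + 1 := by
  rw [natDegree_X_mul, natDegree_num l b hl]
  exact fun h => hl (by simpa [h] using (leadingCoeff_num l b).symm)

theorem natDegree_levelPoly (hl : l ≠ 0) : (levelPoly l b).natDegree = m + 1 := by
  rw [levelPoly, natDegree_sub_eq_right_of_natDegree_lt] <;> rw [natDegree_X_mul_num l b hl]
  exact Nat.lt_succ_of_le (natDegree_den_le b)

theorem leadingCoeff_levelPoly (hl : l ≠ 0) : (levelPoly l b).leadingCoeff = -l := by
  rw [levelPoly, leadingCoeff_sub_of_degree_lt', leadingCoeff_mul, leadingCoeff_X, one_mul,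
    leadingCoeff_num]
  refine degree_lt_degree ?_
  rw [natDegree_X_mul_num l b hl]
  exact Nat.lt_succ_of_le (natDegree_den_le b)

variable {l b}

theorem norm_mul_eval_num_lt (hl : ‖l‖ = 1) (hb : ∀ k, ‖b k‖ < 1) {z : ℂ} (hz : ‖z‖ < 1) :
    ‖z * (num l b).eval z‖ < ‖(den b).eval z‖ := by
  have hden : 0 < ‖(den b).eval z‖ := norm_pos_iff.2 <| by
    rw [eval_den]
    exact Finset.prod_ne_zero_iff.2 fun k _ => one_sub_conj_mul_ne_zero (hb k) hz.le
  calc ‖z * (num l b).eval z‖ = ‖z‖ * ∏ k, ‖z - b k‖ := by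
        rw [eval_num, norm_mul, norm_mul, hl, one_mul, norm_prod]
    _ ≤ ‖z‖ * ‖(den b).eval z‖ := by
        rw [eval_den, norm_prod]
        gcongr with k
        exact norm_sub_le_norm_one_sub_conj_mul (hb k).le hz.le
    _ < ‖(den b).eval z‖ := mul_lt_of_lt_one_left hden hz

theorem norm_eval_den_lt (hl : ‖l‖ = 1) (hb : ∀ k, ‖b k‖ < 1) {z : ℂ} (hz : 1 < ‖z‖) :
    ‖(den b).eval z‖ < ‖z * (num l b).eval z‖ := by
  have hnum : 0 < ∏ k, ‖z - b k‖ := Finset.prod_pos fun k _ =>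
    norm_pos_iff.2 <| sub_ne_zero.2 fun h => by rw [h] at hz; linarith [hb k]
  calc ‖(den b).eval z‖ ≤ ∏ k, ‖z - b k‖ := by
        rw [eval_den, norm_prod]
        gcongr with k
        exact (norm_one_sub_conj_mul_lt_norm_sub (hb k) hz).le
    _ < ‖z‖ * ∏ k, ‖z - b k‖ := lt_mul_left hnum hz
    _ = ‖z * (num l b).eval z‖ := by
        rw [eval_num, norm_mul, norm_mul, hl, one_mul, norm_prod]

theorem isRoot_levelPoly_iff {w : ℂ} :
    (levelPoly l b).IsRoot w ↔ (den b).eval w = w * (num l b).eval w := by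
  rw [IsRoot, levelPoly, eval_sub, eval_mul, eval_X, sub_eq_zero]

theorem norm_eq_one_of_isRoot (hl : ‖l‖ = 1) (hb : ∀ k, ‖b k‖ < 1) {w : ℂ}
    (hw : (levelPoly l b).IsRoot w) : ‖w‖ = 1 := by
  rw [isRoot_levelPoly_iff] at hw
  rcases lt_trichotomy ‖w‖ 1 with h | h | h
  · exact absurd (congrArg norm hw) (norm_mul_eval_num_lt hl hb h).ne'
  · exact h
  · exact absurd (congrArg norm hw) (norm_eval_den_lt hl hb h).ne

theorem norm_eq_one_of_mem_levelSet (hl : ‖l‖ = 1) (hb : ∀ k, ‖b k‖ < 1) {w : ℂ}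
    (hw : w ∈ levelSet l b) : ‖w‖ = 1 :=
  norm_eq_one_of_isRoot hl hb (isRoot_of_mem_roots (Multiset.mem_toFinset.1 hw))

theorem angularDeriv_pos (hb : ∀ k, ‖b k‖ < 1) (w : ℂ) : 0 < angularDeriv b w :=
  add_pos_of_pos_of_nonneg one_pos <| Finset.sum_nonneg fun k _ =>
    div_nonneg (by rw [sub_nonneg, normSq_eq_norm_sq]; exact pow_le_one₀ (norm_nonneg _) (hb k).le)
      (normSq_nonneg _)

theorem one_lt_angularDeriv (hm : 1 ≤ m) (hb : ∀ k, ‖b k‖ < 1) {w : ℂ} (hw : ‖w‖ = 1) :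
    1 < angularDeriv b w := by
  refine lt_add_of_pos_right _ <|
    Finset.sum_pos (fun k _ => div_pos ?_ ?_) ⟨⟨0, hm⟩, Finset.mem_univ _⟩
  · rw [sub_pos, normSq_eq_norm_sq]; exact pow_lt_one₀ (norm_nonneg _) (hb k) two_ne_zero
  · exact normSq_pos.2 (sub_ne_zero_of_norm_eq_one (hb k) hw)

theorem eval_derivative_levelPoly (hl : ‖l‖ = 1) (hb : ∀ k, ‖b k‖ < 1) {w : ℂ}
    (hw : (levelPoly l b).IsRoot w) :
    (levelPoly l b).derivative.eval w = -angularDeriv b w * (num l b).eval w := by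
  have hw1 := norm_eq_one_of_isRoot hl hb hw
  have hwb : ∀ k, w - b k ≠ 0 := fun k => sub_ne_zero_of_norm_eq_one (hb k) hw1
  have hden : ∀ k, 1 - conj (b k) * w ≠ 0 := fun k => one_sub_conj_mul_ne_zero (hb k) hw1.le
  have hnum' : (num l b).derivative.eval w = (num l b).eval w * ∑ k, 1 / (w - b k) := by
    rw [num, derivative_C_mul, eval_mul, eval_mul, eval_C, Lagrange.nodal,
      eval_derivative_finset_prod _ _ (by simpa using hwb), mul_assoc]
    simp
  have hden' : (den b).derivative.eval w =
      (den b).eval w * ∑ k, -conj (b k) / (1 - conj (b k) * w) := by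
    rw [den, eval_derivative_finset_prod _ _ (by simpa using hden)]
    simp
  have hρ : (angularDeriv b w : ℂ) =
      1 + (w * ∑ k, 1 / (w - b k) - w * ∑ k, -conj (b k) / (1 - conj (b k) * w)) := by
    rw [angularDeriv, ofReal_add, ofReal_one, ofReal_sum, Finset.mul_sum, Finset.mul_sum,
      ← Finset.sum_sub_distrib]
    congr 1
    refine Finset.sum_congr rfl fun k _ => ?_
    rw [← conj_mul_div_one_sub_conj_mul_add_div_sub (hb k) hw1]
    ring
  rw [levelPoly, derivative_sub, derivative_mul, derivative_X, one_mul, eval_sub, eval_add,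
    eval_mul, eval_X, hnum', hden', isRoot_levelPoly_iff.1 hw, hρ]
  ring

theorem eval_num_ne_zero (hl : ‖l‖ = 1) (hb : ∀ k, ‖b k‖ < 1) {w : ℂ} (hw : ‖w‖ = 1) :
    (num l b).eval w ≠ 0 := by
  rw [eval_num]
  refine mul_ne_zero (ne_zero_of_norm_ne_zero (hl ▸ one_ne_zero)) ?_
  exact Finset.prod_ne_zero_iff.2 fun k _ => sub_ne_zero_of_norm_eq_one (hb k) hw

theorem nodup_roots_levelPoly (hl : ‖l‖ = 1) (hb : ∀ k, ‖b k‖ < 1) :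
    (levelPoly l b).roots.Nodup := by
  have hl0 : l ≠ 0 := ne_zero_of_norm_ne_zero (hl ▸ one_ne_zero)
  have hne : levelPoly l b ≠ 0 := leadingCoeff_ne_zero.1 <| by
    rw [leadingCoeff_levelPoly l b hl0]; exact neg_ne_zero.2 hl0
  refine nodup_roots_of_eval_derivative_ne_zero hne fun w hw => ?_
  rw [eval_derivative_levelPoly hl hb hw]
  exact mul_ne_zero (neg_ne_zero.2 (ofReal_ne_zero.2 (angularDeriv_pos hb w).ne'))
    (eval_num_ne_zero hl hb (norm_eq_one_of_isRoot hl hb hw))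

theorem card_levelSet (hl : ‖l‖ = 1) (hb : ∀ k, ‖b k‖ < 1) : (levelSet l b).card = m + 1 := by
  rw [levelSet, Multiset.toFinset_card_of_nodup (nodup_roots_levelPoly hl hb),
    IsAlgClosed.card_roots_eq_natDegree,
    natDegree_levelPoly l b (ne_zero_of_norm_ne_zero (hl ▸ one_ne_zero))]

theorem levelPoly_eq_C_mul_nodal (hl : ‖l‖ = 1) (hb : ∀ k, ‖b k‖ < 1) :
    levelPoly l b = C (-l) * Lagrange.nodal (levelSet l b) id := by
  conv_lhs => rw [← C_leadingCoeff_mul_prod_multiset_X_sub_C (p := levelPoly l b)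
    IsAlgClosed.card_roots_eq_natDegree]
  rw [leadingCoeff_levelPoly l b (ne_zero_of_norm_ne_zero (hl ▸ one_ne_zero)),
    Lagrange.nodal, levelSet, Finset.prod_eq_multiset_prod, Multiset.toFinset_val,
    Multiset.dedup_eq_self.2 (nodup_roots_levelPoly hl hb)]
  rfl

theorem eval_derivative_nodal_levelSet (hl : ‖l‖ = 1) (hb : ∀ k, ‖b k‖ < 1) {w : ℂ}
    (hw : w ∈ levelSet l b) :
    (Lagrange.nodal (levelSet l b) id).derivative.eval w =
      angularDeriv b w * (num l b).eval w / l := by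
  have hD := eval_derivative_levelPoly hl hb (isRoot_of_mem_roots (Multiset.mem_toFinset.1 hw))
  rw [levelPoly_eq_C_mul_nodal hl hb, derivative_C_mul, eval_mul, eval_C] at hD
  field_simp [ne_zero_of_norm_ne_zero (hl ▸ one_ne_zero)]
  linear_combination -hD

theorem degree_num_lt_card_levelSet (hl : ‖l‖ = 1) (hb : ∀ k, ‖b k‖ < 1) :
    (num l b).degree < (levelSet l b).card := by
  rw [card_levelSet hl hb]
  refine degree_le_natDegree.trans_lt ?_
  rw [natDegree_num l b (ne_zero_of_norm_ne_zero (hl ▸ one_ne_zero))]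
  exact_mod_cast Nat.lt_succ_self m

theorem eval_num_div_eval_levelPoly (hl : ‖l‖ = 1) (hb : ∀ k, ‖b k‖ < 1) {z : ℂ}
    (hz : z ∉ levelSet l b) :
    (num l b).eval z / (levelPoly l b).eval z =
      ∑ w ∈ levelSet l b, (angularDeriv b w : ℂ)⁻¹ / (w - z) := by
  have hl0 : l ≠ 0 := ne_zero_of_norm_ne_zero (hl ▸ one_ne_zero)
  have hzR : ∀ w ∈ levelSet l b, z ≠ id w := fun w hw h => hz (h ▸ hw)
  rw [Lagrange.eq_interpolate (Set.injOn_id _) (degree_num_lt_card_levelSet hl hb),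
    Lagrange.eval_interpolate_not_at_node _ hzR, levelPoly_eq_C_mul_nodal hl hb, eval_mul,
    eval_C, mul_comm (-l), mul_div_mul_left _ _ (Lagrange.eval_nodal_not_at_node hzR),
    Finset.sum_div]
  refine Finset.sum_congr rfl fun w hw => ?_
  have hzw : z - w ≠ 0 := sub_ne_zero.2 (hzR w hw)
  have hwz : w - z ≠ 0 := sub_ne_zero.2 (hzR w hw).symm
  have hρ : (angularDeriv b w : ℂ) ≠ 0 := ofReal_ne_zero.2 (angularDeriv_pos hb w).ne'
  have hnum := eval_num_ne_zero hl hb (norm_eq_one_of_mem_levelSet hl hb hw)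
  rw [Lagrange.nodalWeight_eq_eval_derivative_nodal hw, id, eval_derivative_nodal_levelSet hl hb hw]
  field_simp
  ring

theorem sum_inv_angularDeriv (hl : ‖l‖ = 1) (hb : ∀ k, ‖b k‖ < 1) :
    ∑ w ∈ levelSet l b, (angularDeriv b w)⁻¹ = 1 := by
  have hl0 : l ≠ 0 := ne_zero_of_norm_ne_zero (hl ▸ one_ne_zero)
  have hsum := Lagrange.coeff_eq_sum (Set.injOn_id _) (degree_num_lt_card_levelSet hl hb)
  have hcoeff : (num l b).coeff m = l := by
    simpa only [leadingCoeff, natDegree_num l b hl0] using leadingCoeff_num l b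
  rw [card_levelSet hl hb, Nat.add_sub_cancel, hcoeff] at hsum
  have hterm : ∀ w ∈ levelSet l b, (num l b).eval (id w) /
      ∏ j ∈ (levelSet l b).erase w, (id w - id j) = l * (angularDeriv b w : ℂ)⁻¹ := by
    intro w hw
    have hρ : (angularDeriv b w : ℂ) ≠ 0 := ofReal_ne_zero.2 (angularDeriv_pos hb w).ne'
    have hnum := eval_num_ne_zero hl hb (norm_eq_one_of_mem_levelSet hl hb hw)
    rw [← Lagrange.eval_nodal, ← Lagrange.eval_nodal_derivative_eval_node_eq hw, id,
      eval_derivative_nodal_levelSet hl hb hw]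
    field_simp
  rw [Finset.sum_congr rfl hterm, ← Finset.mul_sum, eq_comm, mul_eq_left₀ hl0] at hsum
  exact_mod_cast hsum

end Blaschke

open Blaschke in
theorem IsBlaschke.exists_sum_div_one_sub_mul {m : ℕ} {φ : ℂ → ℂ} (hφ : IsBlaschke m φ)
    (hm : 1 ≤ m) :
    ∃ (s : Finset ℂ) (t : ℂ → ℝ), s.card = m + 1 ∧ (∀ ζ ∈ s, ‖ζ‖ = 1) ∧
      (∀ ζ ∈ s, 0 < t ζ ∧ t ζ < 1) ∧ ∑ ζ ∈ s, t ζ = 1 ∧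
      ∀ z ∈ ball (0:ℂ) 1, φ z / (1 - z * φ z) = ∑ ζ ∈ s, t ζ * (ζ / (1 - ζ * z)) := by
  obtain ⟨l, b, hl, hb, rfl⟩ := hφ
  replace hb : ∀ k, ‖b k‖ < 1 := fun k => mem_ball_zero_iff.1 (hb k)
  have hR : ∀ w ∈ levelSet l b, ‖w‖ = 1 := fun w => norm_eq_one_of_mem_levelSet hl hb
  refine ⟨(levelSet l b).image (·⁻¹), fun ζ => (angularDeriv b ζ⁻¹)⁻¹, ?_, ?_, ?_, ?_, ?_⟩
  · rw [Finset.card_image_of_injective _ inv_injective, card_levelSet hl hb]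
  · simp only [Finset.mem_image]
    rintro _ ⟨w, hw, rfl⟩
    rw [norm_inv, hR w hw, inv_one]
  · simp only [Finset.mem_image]
    rintro _ ⟨w, hw, rfl⟩
    have hρ := one_lt_angularDeriv hm hb (hR w hw)
    rw [inv_inv]
    exact ⟨inv_pos.2 (zero_lt_one.trans hρ), inv_lt_one_of_one_lt₀ hρ⟩
  · rw [Finset.sum_image inv_injective.injOn]
    simpa only [inv_inv] using sum_inv_angularDeriv hl hb
  · intro z hz
    have hz1 := mem_ball_zero_iff.1 hz
    have hzR : z ∉ levelSet l b := fun h => by linarith [hR z h]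
    have hden : (den b).eval z ≠ 0 := by
      rw [eval_den]
      exact Finset.prod_ne_zero_iff.2 fun k _ => one_sub_conj_mul_ne_zero (hb k) hz1.le
    have hlevel : (levelPoly l b).eval z ≠ 0 := fun h =>
      (norm_mul_eval_num_lt hl hb hz1).ne' (congrArg norm (isRoot_levelPoly_iff.1 h))
    have hφ : l * ∏ k, (z - b k) / (1 - conj (b k) * z) = (num l b).eval z / (den b).eval z := by
      rw [eval_num, eval_den, Finset.prod_div_distrib, mul_div_assoc]
    have hPD : (num l b).eval z / (den b).eval z / (1 - z * ((num l b).eval z / (den b).eval z)) =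
        (num l b).eval z / (levelPoly l b).eval z := by
      rw [levelPoly, eval_sub, eval_mul, eval_X] at hlevel ⊢
      field_simp
    dsimp only
    rw [hφ, hPD, eval_num_div_eval_levelPoly hl hb hzR, Finset.sum_image inv_injective.injOn]
    refine Finset.sum_congr rfl fun w hw => ?_
    have hw0 : w ≠ 0 := ne_zero_of_norm_ne_zero (hR w hw ▸ one_ne_zero)
    have hwz : w - z ≠ 0 := sub_ne_zero.2 fun h => hzR (h ▸ hw)
    rw [inv_inv, ofReal_inv]
    field_simp

theorem eq_mul_exp_sub_of_deriv_eq_mul {U : Set ℂ} (hU : IsOpen U) (hU' : IsPreconnected U)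
    {g L : ℂ → ℂ} (hg : DifferentiableOn ℂ g U) (hL : DifferentiableOn ℂ L U)
    (h : ∀ z ∈ U, deriv g z = deriv L z * g z) {z₀ z : ℂ} (hz₀ : z₀ ∈ U) (hz : z ∈ U) :
    g z = g z₀ * exp (L z - L z₀) := by
  have hderiv : ∀ x ∈ U, HasDerivAt (fun x => g x * exp (-L x)) 0 x := by
    intro x hx
    have hgx := (hg.differentiableAt (hU.mem_nhds hx)).hasDerivAt
    have hLx := (hL.differentiableAt (hU.mem_nhds hx)).hasDerivAt
    refine (hgx.mul hLx.neg.cexp).congr_deriv ?_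
    rw [h x hx]
    ring
  have hconst : g z * exp (-L z) = g z₀ * exp (-L z₀) :=
    hU.is_const_of_deriv_eq_zero hU'
      (fun x hx => (hderiv x hx).differentiableAt.differentiableWithinAt)
      (fun x hx => (hderiv x hx).deriv) hz hz₀
  calc g z = g z * exp (-L z) * exp (L z) := by
        rw [mul_assoc, ← exp_add, neg_add_cancel, exp_zero, mul_one]
    _ = g z₀ * exp (L z - L z₀) := by
        rw [hconst, mul_assoc, ← exp_add, neg_add_eq_sub]

theorem eq_prod_cpow_of_deriv_eq_mul_sum (s : Finset ℂ) (hs : ∀ ζ ∈ s, ‖ζ‖ ≤ 1) (a : ℂ → ℂ)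
    {g : ℂ → ℂ} (hg : DifferentiableOn ℂ g (ball 0 1)) (hg0 : g 0 = 1)
    (hg' : ∀ z ∈ ball (0:ℂ) 1, deriv g z = g z * ∑ ζ ∈ s, a ζ * (ζ / (1 - ζ * z)))
    {z : ℂ} (hz : z ∈ ball (0:ℂ) 1) :
    g z = ∏ ζ ∈ s, (1 - ζ * z) ^ (-a ζ) := by
  have hslit : ∀ z ∈ ball (0:ℂ) 1, ∀ ζ ∈ s, 1 - ζ * z ∈ slitPlane := fun z hz ζ hζ => by
    refine sub_eq_add_neg (1:ℂ) _ ▸ mem_slitPlane_of_norm_lt_one ?_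
    rw [norm_neg, norm_mul]
    exact mul_lt_one_of_nonneg_of_lt_one_right (hs ζ hζ) (norm_nonneg z) (mem_ball_zero_iff.1 hz)
  set L : ℂ → ℂ := fun z => ∑ ζ ∈ s, log (1 - ζ * z) * -a ζ
  have hL : ∀ z ∈ ball (0:ℂ) 1, HasDerivAt L (∑ ζ ∈ s, a ζ * (ζ / (1 - ζ * z))) z := by
    intro z hz
    refine HasDerivAt.fun_sum fun ζ hζ => ?_
    have h1 : HasDerivAt (fun z => 1 - ζ * z) (-ζ) z := by
      simpa using ((hasDerivAt_id z).const_mul ζ).const_sub 1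
    refine ((h1.clog (hslit z hz ζ hζ)).mul_const (-a ζ)).congr_deriv ?_
    ring
  have hLd : DifferentiableOn ℂ L (ball 0 1) :=
    fun z hz => (hL z hz).differentiableAt.differentiableWithinAt
  rw [eq_mul_exp_sub_of_deriv_eq_mul isOpen_ball (convex_ball 0 1).isPreconnected hg hLd
    (fun z hz => by rw [hg' z hz, (hL z hz).deriv, mul_comm]) (mem_ball_self one_pos) hz]
  simp only [hg0, L, mul_zero, sub_zero, log_one, zero_mul, Finset.sum_const_zero, one_mul,
    exp_sum]
  refine Finset.prod_congr rfl fun ζ hζ => ?_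
  rw [cpow_def_of_ne_zero (slitPlane_ne_zero (hslit z hz ζ hζ))]

theorem stmt5_general (α : ℝ) (m : ℕ) (hm : 1 ≤ m)
    (f : ℂ → ℂ) (hf : DifferentiableOn ℂ f (ball 0 1))
    (hf1 : deriv f 0 = 1)
    (hfd : ∀ z ∈ ball (0:ℂ) 1, deriv f z ≠ 0)
    (φ : ℂ → ℂ) (hφ : IsBlaschke m φ)
    (hrel : ∀ z ∈ ball (0:ℂ) 1,
      deriv (deriv f) z / deriv f z = α * φ z / (1 - z * φ z)) :
    ∃ (ζ : Fin (m + 1) → ℂ) (t : Fin (m + 1) → ℝ),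
      Function.Injective ζ ∧ (∀ k, ‖ζ k‖ = 1) ∧
      (∀ k, 0 < t k ∧ t k < 1) ∧ (∑ k, t k) = 1 ∧
      ∀ z ∈ ball (0:ℂ) 1,
        deriv f z = ∏ k, (1 - ζ k * z) ^ ((-(α * t k) : ℝ) : ℂ) := by
  obtain ⟨s, t, hcard, hs, ht, hsum, hφs⟩ := hφ.exists_sum_div_one_sub_mul hm
  have hf'' : ∀ z ∈ ball (0:ℂ) 1, deriv (deriv f) z =
      deriv f z * ∑ ζ ∈ s, ((α * t ζ : ℝ) : ℂ) * (ζ / (1 - ζ * z)) := by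
    intro z hz
    rw [(div_eq_iff (hfd z hz)).1 (hrel z hz), mul_div_assoc, hφs z hz, Finset.mul_sum,
      Finset.sum_mul, Finset.mul_sum]
    refine Finset.sum_congr rfl fun ζ _ => ?_
    push_cast
    ring
  have hf' (z) (hz : z ∈ ball (0:ℂ) 1) := eq_prod_cpow_of_deriv_eq_mul_sum s
    (fun ζ hζ => (hs ζ hζ).le) _ (hf.deriv isOpen_ball) hf1 hf'' hz
  let e : Fin (m + 1) ≃ s := (s.equivFin.trans (finCongr hcard)).symm
  refine ⟨fun k => e k, fun k => t (e k), Subtype.val_injective.comp e.injective,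
    fun k => hs _ (e k).2, fun k => ht _ (e k).2, ?_, fun z hz => ?_⟩
  · rw [e.sum_comp (fun ζ => t ζ), Finset.sum_coe_sort s t, hsum]
  · simp only [hf' z hz, ← Finset.prod_coe_sort s, ← e.prod_comp, ofReal_neg]

theorem stmt5 (α : ℝ) (hα : α ∈ Set.Ioc (0:ℝ) 3) (m : ℕ) (hm : 1 ≤ m)
    (f : ℂ → ℂ) (hf : DifferentiableOn ℂ f (ball 0 1))
    (hf0 : f 0 = 0) (hf1 : deriv f 0 = 1)
    (hfd : ∀ z ∈ ball (0:ℂ) 1, deriv f z ≠ 0)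
    (φ : ℂ → ℂ) (hφ : IsBlaschke m φ)
    (hrel : ∀ z ∈ ball (0:ℂ) 1,
      deriv (deriv f) z / deriv f z = α * φ z / (1 - z * φ z)) :
    ∃ (ζ : Fin (m + 1) → ℂ) (t : Fin (m + 1) → ℝ),
      Function.Injective ζ ∧ (∀ k, ‖ζ k‖ = 1) ∧
      (∀ k, 0 < t k ∧ t k < 1) ∧ (∑ k, t k) = 1 ∧
      ∀ z ∈ ball (0:ℂ) 1,
        deriv f z = ∏ k, (1 - ζ k * z) ^ ((-(α * t k) : ℝ) : ℂ) :=
  stmt5_general α m hm f hf hf1 hfd φ hφ hrel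
end

section
/- Let α ∈ (0, 3], let m ≥ 1, and let f be analytic on 𝔻 with f'(z) = ∏_{k=1}^{m+1} (1 − ζ_k z)^{−α t_k}, where ζ₁, …, ζ_{m+1} ∈ 𝕋 are pairwise distinct and t₁, …, t_{m+1} are real numbers with 0 < t_k < 1 and t₁ + ⋯ + t_{m+1} = 1. Then there exists a finite Blaschke product φ of degree m such that f''(z)/f'(z) = α·φ(z)/(1 − z·φ(z)) for all z ∈ 𝔻. -/
/-!
Write `p z = ∑ tₖ / (1 - ζₖ z)` and `s z = ∑ tₖ ζₖ / (1 - ζₖ z)`. The logarithmic derivative of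
`f'` is `α s`, and `p - z s = ∑ tₖ = 1`, so `α s = α φ / (1 - z φ)` for `φ = s / p`. Over the common
denominator `∏ (1 - ζₖ z)`, `p` and `s` have numerators `P` and `Q` of degree at most `m`, and
`|ζₖ| = 1` makes `Q` a unimodular multiple of the reciprocal polynomial `zᵐ · conj (P (1 / z̄))`.
As `Re p ≥ 1/2` on the closed disk, and `P (ζ̄ₖ) = tₖ ∏_{j ≠ k} (1 - ζⱼ ζ̄ₖ) ≠ 0` at the poles, `P`
has no zeros in the closed disk; the quotient of the reciprocal of such a polynomial by the
polynomial itself is a Blaschke product of degree `m`.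
-/

open Complex Metric

open Finset Polynomial

namespace Polynomial

theorem reflect_multiset_prod {R : Type*} [CommSemiring R] {s : Multiset R[X]}
    (hs : ∀ p ∈ s, p.natDegree ≤ 1) :
    reflect (Multiset.card s) s.prod = (s.map (reflect 1)).prod := by
  induction s using Multiset.induction_on with
  | empty => simp
  | cons p s ih =>
    rw [Multiset.forall_mem_cons] at hs
    have hdeg : s.prod.natDegree ≤ Multiset.card s := by
      refine (natDegree_multiset_prod_le s).trans ?_
      simpa using Multiset.sum_le_card_nsmul (s.map natDegree) 1 (by simpa using hs.2)
    rw [Multiset.card_cons, add_comm, Multiset.prod_cons, reflect_mul _ _ hs.1 hdeg, ih hs.2,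
      Multiset.map_cons, Multiset.prod_cons]

theorem reflect_eq_X_pow_mul_reflect {R : Type*} [Semiring R] {p : R[X]} {M N : ℕ}
    (hp : p.natDegree ≤ M) (hMN : M ≤ N) : reflect N p = X ^ (N - M) * reflect M p := by
  conv_lhs => rw [← Nat.sub_add_cancel hMN, ← one_mul p]
  rw [reflect_mul _ _ (by simp) hp, reflect_one]

theorem reflect_prod {R ι : Type*} [CommSemiring R] {s : Finset ι} {f : ι → R[X]}
    (hf : ∀ i ∈ s, (f i).natDegree ≤ 1) :
    reflect #s (∏ i ∈ s, f i) = ∏ i ∈ s, reflect 1 (f i) := by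
  have h := reflect_multiset_prod (s := s.val.map f) (by simpa using hf)
  rwa [Multiset.card_map, Multiset.map_map] at h

theorem reflect_sum {R ι : Type*} [Semiring R] (s : Finset ι) (f : ι → R[X]) (N : ℕ) :
    reflect N (∑ i ∈ s, f i) = ∑ i ∈ s, reflect N (f i) := by
  ext n
  simp [coeff_reflect, finsetSum_coeff]

theorem reflect_one_one_sub_C_mul_X {R : Type*} [CommRing R] (a : R) :
    reflect 1 (1 - C a * X) = X - C a := by
  simp [reflect_sub, reflect_C_mul]

end Polynomial

namespace IsBlaschke

theorem const_mul {m : ℕ} {φ : ℂ → ℂ} (hφ : IsBlaschke m φ) {c : ℂ} (hc : ‖c‖ = 1) :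
    IsBlaschke m (fun z => c * φ z) := by
  obtain ⟨l, b, hl, hb, rfl⟩ := hφ
  exact ⟨c * l, b, by rw [norm_mul, hc, hl, one_mul], hb, by funext z; ring⟩

theorem mul {m n : ℕ} {φ ψ : ℂ → ℂ} (hφ : IsBlaschke m φ) (hψ : IsBlaschke n ψ) :
    IsBlaschke (m + n) (fun z => φ z * ψ z) := by
  obtain ⟨l₁, b₁, hl₁, hb₁, rfl⟩ := hφ
  obtain ⟨l₂, b₂, hl₂, hb₂, rfl⟩ := hψ
  refine ⟨l₁ * l₂, Fin.append b₁ b₂, by rw [norm_mul, hl₁, hl₂, one_mul], fun k => ?_, ?_⟩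
  · exact Fin.addCases (fun i => by simpa using hb₁ i) (fun i => by simpa using hb₂ i) k
  · funext z
    simp only [Fin.prod_univ_add, Fin.append_left, Fin.append_right]
    ring

theorem pow (n : ℕ) : IsBlaschke n (· ^ n) :=
  ⟨1, 0, norm_one, fun _ => mem_ball_self one_pos, by funext z; simp⟩

end IsBlaschke

theorem exists_isBlaschke_mul_sub_eq {w : ℂ} (hw : 1 < ‖w‖) :
    ∃ ψ, IsBlaschke 1 ψ ∧ ∀ z ∈ ball (0 : ℂ) 1, ψ z * (z - w) = 1 - starRingEnd ℂ w * z := by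
  have hw0 : w ≠ 0 := norm_pos_iff.mp (one_pos.trans hw)
  refine ⟨_, ⟨starRingEnd ℂ w / w, fun _ => (starRingEnd ℂ w)⁻¹, ?_, fun _ => ?_, rfl⟩, ?_⟩
  · rw [norm_div, Complex.norm_conj, div_self (norm_ne_zero_iff.mpr hw0)]
  · rw [mem_ball_zero_iff, norm_inv, Complex.norm_conj]
    exact inv_lt_one_of_one_lt₀ hw
  · intro z hz
    have hwz : w - z ≠ 0 := by
      rw [sub_ne_zero]; rintro rfl
      exact (mem_ball_zero_iff.mp hz).not_gt hw
    have hcw : starRingEnd ℂ w ≠ 0 := (_root_.map_ne_zero _).mpr hw0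
    simp only [Finset.univ_unique, Finset.prod_singleton, map_inv₀, Complex.conj_conj]
    field_simp
    ring

theorem exists_isBlaschke_mul_prod_sub_eq {R : Multiset ℂ} (hR : ∀ w ∈ R, 1 < ‖w‖) :
    ∃ φ, IsBlaschke (Multiset.card R) φ ∧ ∀ z ∈ ball (0 : ℂ) 1,
      φ z * (R.map (z - ·)).prod = (R.map (fun w => 1 - starRingEnd ℂ w * z)).prod := by
  induction R using Multiset.induction_on with
  | empty => exact ⟨_, IsBlaschke.pow 0, by simp⟩
  | cons w R ih =>
    rw [Multiset.forall_mem_cons] at hR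
    obtain ⟨φ, hφ, hφR⟩ := ih hR.2
    obtain ⟨ψ, hψ, hψw⟩ := exists_isBlaschke_mul_sub_eq hR.1
    refine ⟨_, Multiset.card_cons w R ▸ hφ.mul hψ, fun z hz => ?_⟩
    simp only [Multiset.map_cons, Multiset.prod_cons, ← hψw z hz, ← hφR z hz]
    ring

theorem exists_isBlaschke_mul_eval_eq_eval_reflect {P : ℂ[X]} {m : ℕ} (hdeg : P.natDegree ≤ m)
    (hP : ∀ z : ℂ, ‖z‖ ≤ 1 → P.eval z ≠ 0) :
    ∃ φ, IsBlaschke m φ ∧ ∀ z ∈ ball (0 : ℂ) 1,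
      φ z * P.eval z = (reflect m (P.map (starRingEnd ℂ))).eval z := by
  have hP0 : P ≠ 0 := by rintro rfl; exact hP 0 (by simp) eval_zero
  set R := P.roots
  set L := P.leadingCoeff
  set d := P.natDegree
  have hL : L ≠ 0 := leadingCoeff_ne_zero.mpr hP0
  have hcard : Multiset.card R = d := IsAlgClosed.card_roots_eq_natDegree
  have hR : ∀ w ∈ R, 1 < ‖w‖ := fun w hw => not_le.mp fun h => hP w h ((mem_roots hP0).mp hw)
  have hfactor : C L * (R.map (X - C ·)).prod = P :=
    C_leadingCoeff_mul_prod_multiset_X_sub_C hcard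
  have hreflect : reflect m (P.map (starRingEnd ℂ)) = C (starRingEnd ℂ L) * X ^ (m - d) *
      (R.map (fun w => 1 - C (starRingEnd ℂ w) * X)).prod := by
    have hconj : P.map (starRingEnd ℂ) =
        C (starRingEnd ℂ L) * ((R.map (starRingEnd ℂ)).map (X - C ·)).prod := by
      rw [← hfactor, Polynomial.map_mul, map_C, Polynomial.map_multiset_prod, Multiset.map_map,
        Multiset.map_map]
      simp
    have hprod := reflect_multiset_prod (s := (R.map (starRingEnd ℂ)).map (X - C ·))
      (by simp)
    rw [Multiset.card_map, Multiset.card_map, hcard] at hprod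
    rw [hconj, reflect_C_mul, reflect_eq_X_pow_mul_reflect (by
      rw [natDegree_multiset_prod_X_sub_C_eq_card, Multiset.card_map, hcard]) hdeg, hprod]
    simp [Multiset.map_map, mul_assoc]
  obtain ⟨φ, hφ, hφR⟩ := exists_isBlaschke_mul_prod_sub_eq hR
  have hBl := ((IsBlaschke.pow (m - d)).mul hφ).const_mul (c := starRingEnd ℂ L / L)
    (by rw [norm_div, Complex.norm_conj, div_self (norm_ne_zero_iff.mpr hL)])
  rw [hcard, Nat.sub_add_cancel hdeg] at hBl
  refine ⟨_, hBl, fun z hz => ?_⟩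
  rw [hreflect, ← hfactor]
  simp only [eval_mul, eval_C, eval_pow, eval_X, eval_multiset_prod, Multiset.map_map,
    Function.comp_def, eval_sub, eval_one, ← hφR z hz]
  field_simp

theorem Complex.one_half_le_re_inv_one_sub {u : ℂ} (hu : ‖u‖ ≤ 1) (hu1 : u ≠ 1) :
    1 / 2 ≤ ((1 - u)⁻¹).re := by
  have hpos : 0 < normSq (1 - u) := normSq_pos.mpr (sub_ne_zero.mpr hu1.symm)
  have hu2 : normSq u ≤ 1 := by rw [normSq_eq_norm_sq]; nlinarith [norm_nonneg u]
  rw [inv_re, le_div_iff₀ hpos]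
  simp only [normSq_apply, sub_re, one_re, sub_im, one_im] at hu2 ⊢
  nlinarith

theorem Complex.one_sub_mul_mem_slitPlane {ζ z : ℂ} (hζ : ‖ζ‖ = 1) (hz : z ∈ ball (0 : ℂ) 1) :
    1 - ζ * z ∈ slitPlane := by
  simpa [sub_eq_add_neg] using
    mem_slitPlane_of_norm_lt_one (z := -(ζ * z)) (by simpa [hζ] using hz)

theorem Complex.div_one_sub_mul_eq_of_mul_eq {φ p s z : ℂ} (hφ : φ * p = s)
    (h : p - z * s = 1) : φ / (1 - z * φ) = s := by
  have hp : p ≠ 0 := by rintro rfl; simp [← hφ] at h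
  have hden : 1 - z * φ = p⁻¹ := by
    field_simp
    linear_combination h - z * hφ
  rw [hden, div_inv_eq_mul, hφ]

theorem logDeriv_fun_cpow_const {f : ℂ → ℂ} {z : ℂ} (c : ℂ) (hf : DifferentiableAt ℂ f z)
    (hz : f z ∈ slitPlane) : logDeriv (fun x => f x ^ c) z = c * logDeriv f z := by
  have h0 : f z ≠ 0 := slitPlane_ne_zero hz
  have hc0 : f z ^ c ≠ 0 := cpow_ne_zero_iff.mpr (Or.inl h0)
  rw [logDeriv_apply, logDeriv_apply, (hf.hasDerivAt.cpow_const hz).deriv, cpow_sub _ _ h0,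
    cpow_one]
  field_simp

section PartialFractions

variable {ι : Type*} [Fintype ι]

theorem logDeriv_prod_one_sub_mul_cpow {ζ c : ι → ℂ} {z : ℂ}
    (hz : ∀ k, 1 - ζ k * z ∈ slitPlane) :
    logDeriv (fun x => ∏ k, (1 - ζ k * x) ^ c k) z = ∑ k, -(c k * ζ k) / (1 - ζ k * z) := by
  have hd : ∀ k, DifferentiableAt ℂ (fun x => 1 - ζ k * x) z := fun k => by fun_prop
  refine (logDeriv_prod (f := fun k x => (1 - ζ k * x) ^ c k)
    (fun k _ => cpow_ne_zero_iff.mpr (Or.inl (slitPlane_ne_zero (hz k))))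
    (fun k _ => (hd k).cpow_const (hz k))).trans ?_
  refine sum_congr rfl fun k _ => ?_
  rw [logDeriv_fun_cpow_const _ (hd k) (hz k), logDeriv_apply, deriv_const_sub,
    deriv_const_mul _ differentiableAt_id, deriv_id'']
  ring

theorem sum_div_one_sub_mul_sub_mul_sum {ζ w : ι → ℂ} {z : ℂ} (hz : ∀ k, 1 - ζ k * z ≠ 0) :
    ∑ k, w k / (1 - ζ k * z) - z * ∑ k, w k * ζ k / (1 - ζ k * z) = ∑ k, w k := by
  rw [mul_sum, ← sum_sub_distrib]
  refine sum_congr rfl fun k _ => ?_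
  field_simp [hz k]

theorem re_sum_div_one_sub_mul_pos [Nonempty ι] {ζ : ι → ℂ} (hζ1 : ∀ k, ‖ζ k‖ = 1)
    {t : ι → ℝ} (ht : ∀ k, 0 < t k) {z : ℂ} (hz : ‖z‖ ≤ 1) (hz' : ∀ k, 1 - ζ k * z ≠ 0) :
    0 < (∑ k, (t k : ℂ) / (1 - ζ k * z)).re := by
  rw [re_sum]
  refine sum_pos (fun k _ => ?_) univ_nonempty
  have := one_half_le_re_inv_one_sub (u := ζ k * z) (by simpa [hζ1] using hz)
    (fun h => hz' k (by rw [h, sub_self]))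
  rw [div_eq_mul_inv, re_ofReal_mul]
  nlinarith [ht k]

variable [DecidableEq ι]

noncomputable def partialFractionNum (ζ w : ι → ℂ) : ℂ[X] :=
  ∑ k, C (w k) * ∏ j ∈ univ.erase k, (1 - C (ζ j) * X)

theorem eval_partialFractionNum (ζ w : ι → ℂ) (z : ℂ) :
    (partialFractionNum ζ w).eval z = ∑ k, w k * ∏ j ∈ univ.erase k, (1 - ζ j * z) := by
  simp [partialFractionNum, eval_finsetSum, eval_prod]

theorem eval_partialFractionNum_eq_prod_mul_sum {ζ : ι → ℂ} (w : ι → ℂ) {z : ℂ}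
    (hz : ∀ k, 1 - ζ k * z ≠ 0) :
    (partialFractionNum ζ w).eval z = (∏ k, (1 - ζ k * z)) * ∑ k, w k / (1 - ζ k * z) := by
  rw [eval_partialFractionNum, mul_sum]
  refine sum_congr rfl fun k _ => ?_
  rw [← mul_prod_erase univ (fun j => 1 - ζ j * z) (mem_univ k), mul_div_assoc',
    eq_div_iff (hz k)]
  ring

theorem eval_partialFractionNum_of_one_sub_mul_eq_zero {ζ : ι → ℂ} (w : ι → ℂ) {z : ℂ} {k : ι}
    (hk : 1 - ζ k * z = 0) :
    (partialFractionNum ζ w).eval z = w k * ∏ j ∈ univ.erase k, (1 - ζ j * z) := by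
  rw [eval_partialFractionNum, sum_eq_single k]
  · intro j _ hj
    rw [prod_eq_zero (mem_erase.mpr ⟨Ne.symm hj, mem_univ k⟩) hk, mul_zero]
  · simp

theorem eval_partialFractionNum_ne_zero [Nonempty ι] {ζ : ι → ℂ} (hζ : Function.Injective ζ)
    (hζ1 : ∀ k, ‖ζ k‖ = 1) {t : ι → ℝ} (ht : ∀ k, 0 < t k) {z : ℂ} (hz : ‖z‖ ≤ 1) :
    (partialFractionNum ζ (fun k => (t k : ℂ))).eval z ≠ 0 := by
  by_cases h : ∃ k, 1 - ζ k * z = 0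
  · obtain ⟨k, hk⟩ := h
    rw [eval_partialFractionNum_of_one_sub_mul_eq_zero _ hk]
    refine mul_ne_zero (ofReal_ne_zero.mpr (ht k).ne') (prod_ne_zero_iff.mpr fun j hj hj0 => ?_)
    have hz0 : z ≠ 0 := by rintro rfl; simp at hk
    exact (mem_erase.mp hj).1 (hζ (mul_right_cancel₀ hz0 (by linear_combination hk - hj0)))
  · push Not at h
    rw [eval_partialFractionNum_eq_prod_mul_sum _ h]
    refine mul_ne_zero (prod_ne_zero_iff.mpr fun k _ => h k) fun h0 => ?_
    simpa [h0] using re_sum_div_one_sub_mul_pos hζ1 ht hz h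

theorem natDegree_partialFractionNum_le (ζ w : ι → ℂ) :
    (partialFractionNum ζ w).natDegree ≤ Fintype.card ι - 1 := by
  refine natDegree_sum_le_of_forall_le _ _ fun k _ => (natDegree_C_mul_le _ _).trans ?_
  refine (natDegree_prod_le _ _).trans ((sum_le_card_nsmul _ _ 1 fun j _ => ?_).trans ?_)
  · compute_degree
  · simp [card_erase_of_mem]

theorem map_conj_partialFractionNum (ζ w : ι → ℂ) :
    (partialFractionNum ζ w).map (starRingEnd ℂ) =
      partialFractionNum (fun k => starRingEnd ℂ (ζ k)) (fun k => starRingEnd ℂ (w k)) := by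
  simp [partialFractionNum, Polynomial.map_sum, Polynomial.map_prod]

theorem reflect_map_conj_partialFractionNum {ζ : ι → ℂ} (hζ1 : ∀ k, ‖ζ k‖ = 1) (w : ι → ℂ) :
    C ((-1) ^ (Fintype.card ι - 1) * ∏ k, ζ k) *
        reflect (Fintype.card ι - 1) ((partialFractionNum ζ w).map (starRingEnd ℂ)) =
      partialFractionNum ζ (fun k => starRingEnd ℂ (w k) * ζ k) := by
  have hconj : ∀ k, starRingEnd ℂ (ζ k) * ζ k = 1 := fun k => by
    rw [mul_comm, mul_conj, normSq_eq_norm_sq, hζ1, one_pow, ofReal_one]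
  rw [map_conj_partialFractionNum, partialFractionNum, partialFractionNum, reflect_sum, mul_sum]
  refine sum_congr rfl fun k _ => ?_
  have hcard : Fintype.card ι - 1 = #(univ.erase k) := by simp [card_erase_of_mem]
  have hfactor : ∀ j, X - C (starRingEnd ℂ (ζ j)) =
      C (-starRingEnd ℂ (ζ j)) * (1 - C (ζ j) * X) := fun j => by
    rw [mul_sub, mul_one, ← mul_assoc, ← C_mul, neg_mul, hconj, C_neg, C_neg, C_1]
    ring
  have hconst : (-1) ^ #(univ.erase k) * (∏ j, ζ j) * ∏ j ∈ univ.erase k, -starRingEnd ℂ (ζ j)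
      = ζ k := by
    rw [prod_neg, ← mul_prod_erase univ ζ (mem_univ k)]
    calc _ = ζ k * ((-1) * (-1)) ^ #(univ.erase k) *
          ∏ j ∈ univ.erase k, (starRingEnd ℂ (ζ j) * ζ j) := by
          rw [prod_mul_distrib, mul_pow]; ring
      _ = ζ k := by simp [hconj]
  rw [reflect_C_mul, hcard, reflect_prod (fun j _ => by compute_degree)]
  simp only [reflect_one_one_sub_C_mul_X, hfactor, prod_mul_distrib, ← map_prod]
  rw [← hconst]
  simp only [C_mul]
  ring

theorem exists_isBlaschke_mul_sum_div_eq [Nonempty ι]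
    {ζ : ι → ℂ} (hζ : Function.Injective ζ) (hζ1 : ∀ k, ‖ζ k‖ = 1) {t : ι → ℝ}
    (ht : ∀ k, 0 < t k) :
    ∃ φ, IsBlaschke (Fintype.card ι - 1) φ ∧ ∀ z ∈ ball (0 : ℂ) 1,
      φ z * ∑ k, (t k : ℂ) / (1 - ζ k * z) = ∑ k, (t k : ℂ) * ζ k / (1 - ζ k * z) := by
  obtain ⟨φ, hφ, hφP⟩ := exists_isBlaschke_mul_eval_eq_eval_reflect
    (natDegree_partialFractionNum_le ζ _)
    (fun z hz => eval_partialFractionNum_ne_zero hζ hζ1 ht hz)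
  refine ⟨fun z => (-1) ^ (Fintype.card ι - 1) * (∏ k, ζ k) * φ z,
    hφ.const_mul (by simp [norm_prod, hζ1]), fun z hz => ?_⟩
  have hfac : ∀ k, 1 - ζ k * z ≠ 0 := fun k =>
    slitPlane_ne_zero (one_sub_mul_mem_slitPlane (hζ1 k) hz)
  have hrefl := congrArg (eval z) (reflect_map_conj_partialFractionNum hζ1 (fun k => (t k : ℂ)))
  rw [eval_mul, eval_C, ← hφP z hz, eval_partialFractionNum_eq_prod_mul_sum _ hfac,
    eval_partialFractionNum_eq_prod_mul_sum _ hfac] at hrefl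
  simp only [conj_ofReal] at hrefl
  apply mul_left_cancel₀ (prod_ne_zero_iff.mpr fun k _ => hfac k)
  linear_combination hrefl

end PartialFractions

theorem stmt6_general (α : ℝ) (m : ℕ)
    (ζ : Fin (m + 1) → ℂ) (t : Fin (m + 1) → ℝ)
    (hζ : Function.Injective ζ) (hζ1 : ∀ k, ‖ζ k‖ = 1)
    (ht : ∀ k, 0 < t k ∧ t k < 1) (hts : (∑ k, t k) = 1)
    (f : ℂ → ℂ)
    (hf' : ∀ z ∈ ball (0:ℂ) 1,
      deriv f z = ∏ k, (1 - ζ k * z) ^ ((-(α * t k) : ℝ) : ℂ)) :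
    ∃ φ : ℂ → ℂ, IsBlaschke m φ ∧
      ∀ z ∈ ball (0:ℂ) 1,
        deriv (deriv f) z / deriv f z = α * φ z / (1 - z * φ z) := by
  obtain ⟨φ, hφ, hφs⟩ := exists_isBlaschke_mul_sum_div_eq hζ hζ1 (fun k => (ht k).1)
  rw [Fintype.card_fin, add_tsub_cancel_right] at hφ
  refine ⟨φ, hφ, fun z hz => ?_⟩
  have hslit : ∀ k, 1 - ζ k * z ∈ slitPlane := fun k => one_sub_mul_mem_slitPlane (hζ1 k) hz
  have hlog : deriv (deriv f) z / deriv f z = α * ∑ k, (t k : ℂ) * ζ k / (1 - ζ k * z) := by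
    have hf'z := Filter.eventually_of_mem (isOpen_ball.mem_nhds hz) hf'
    rw [← logDeriv_apply, (logDeriv_congr_nhds hf'z).eq_of_nhds,
      logDeriv_prod_one_sub_mul_cpow hslit, mul_sum]
    refine sum_congr rfl fun k _ => ?_
    push_cast
    ring
  have hsum := sum_div_one_sub_mul_sub_mul_sum (w := fun k => (t k : ℂ))
    fun k => slitPlane_ne_zero (hslit k)
  rw [← ofReal_sum, hts, ofReal_one] at hsum
  rw [hlog, mul_div_assoc, div_one_sub_mul_eq_of_mul_eq (hφs z hz) hsum]

theorem stmt6 (α : ℝ) (hα : α ∈ Set.Ioc (0:ℝ) 3) (m : ℕ) (hm : 1 ≤ m)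
    (ζ : Fin (m + 1) → ℂ) (t : Fin (m + 1) → ℝ)
    (hζ : Function.Injective ζ) (hζ1 : ∀ k, ‖ζ k‖ = 1)
    (ht : ∀ k, 0 < t k ∧ t k < 1) (hts : (∑ k, t k) = 1)
    (f : ℂ → ℂ) (hf : DifferentiableOn ℂ f (ball 0 1))
    (hf' : ∀ z ∈ ball (0:ℂ) 1,
      deriv f z = ∏ k, (1 - ζ k * z) ^ ((-(α * t k) : ℝ) : ℂ)) :
    ∃ φ : ℂ → ℂ, IsBlaschke m φ ∧
      ∀ z ∈ ball (0:ℂ) 1,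
        deriv (deriv f) z / deriv f z = α * φ z / (1 - z * φ z) :=
  stmt6_general α m ζ t hζ hζ1 ht hts f hf'
end

section
/- Let φ be a finite Blaschke product of degree m ≥ 1, and let z₁, …, z_{m+1} ∈ 𝕋 be pairwise distinct points satisfying z_k·φ(z_k) = 1 for each k (φ being a rational function, it is defined on 𝕋). For each k set t_k = φ(z_k)/(φ(z_k) + z_k·φ'(z_k)). Then each t_k is a real number with 0 < t_k < 1, one has t₁ + ⋯ + t_{m+1} = 1, and the partial fraction expansion φ(z)/(z·φ(z) − 1) = Σ_{k=1}^{m+1} t_k/(z − z_k) holds for all z ∈ 𝔻. -/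
/-!
Write `φ = l P / Q` with `P = ∏ (X - bⱼ)` and `Q = ∏ (1 - conj bⱼ X)`. The polynomial `l X P - Q`
has degree `m + 1` and leading coefficient `l`, and it vanishes at the `m + 1` points `zₖ`, so it
equals `l R` with `R = ∏ (X - zₖ)`. Hence `φ / (z φ - 1) = P / R`, and differentiating
`z φ(z) - 1 = l R / Q` at a node gives `tₖ = P(zₖ) / R'(zₖ)`. Lagrange interpolation of `P` at the
nodes then gives the partial fraction expansion, and `∑ tₖ = 1` is the coefficient of `X ^ m` in
the monic `P`. Finally `tₖ = 1 / (1 + zₖ φ'(zₖ) / φ(zₖ))`, and on the unit circle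
`z φ'(z) / φ(z) = ∑ (1 - |bⱼ|²) / |z - bⱼ|² > 0`, one term for each Möbius factor.
-/

open Complex Metric

open Polynomial Finset Lagrange ComplexConjugate

namespace Lagrange

variable {F ι : Type*} [Field F] {s : Finset ι} {v : ι → F} {p : F[X]}

theorem eq_C_mul_nodal_of_eval_eq_zero (hvs : Set.InjOn v s) (hp : p.degree ≤ #s)
    (hzero : ∀ i ∈ s, p.eval (v i) = 0) : p = C (p.coeff #s) * nodal s v := by
  refine eq_of_degree_sub_lt_of_eval_index_eq s hvs ?_ fun i hi => by
    simp [hzero i hi, eval_nodal_at_node hi]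
  rw [degree_lt_iff_coeff_zero]
  intro n hn
  rw [coeff_sub, coeff_C_mul]
  rcases hn.eq_or_lt with rfl | hlt
  · rw [← natDegree_nodal (v := v), nodal_monic.coeff_natDegree, mul_one, sub_self]
  · have hpn : p.coeff n = 0 := coeff_eq_zero_of_degree_lt (hp.trans_lt (by exact_mod_cast hlt))
    have hnodal : (nodal s v).coeff n = 0 :=
      coeff_eq_zero_of_natDegree_lt (natDegree_nodal (v := v) ▸ hlt)
    rw [hpn, hnodal, mul_zero, sub_zero]

theorem eval_div_eval_nodal_eq_sum [DecidableEq ι] (hvs : Set.InjOn v s) (hp : p.degree < #s)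
    {x : F} (hx : ∀ i ∈ s, x ≠ v i) :
    p.eval x / (nodal s v).eval x
      = ∑ i ∈ s, p.eval (v i) / (∏ j ∈ s.erase i, (v i - v j)) / (x - v i) := by
  nth_rewrite 1 [eq_interpolate hvs hp]
  rw [eval_interpolate_not_at_node _ hx, mul_div_cancel_left₀ _ (eval_nodal_not_at_node hx)]
  refine sum_congr rfl fun i _ => ?_
  rw [nodalWeight, prod_inv_distrib]
  ring

end Lagrange

section RationalFixedPoints

variable {F : Type*} [Field F] {l : F} {P Q R : F[X]}

theorem C_mul_X_mul_sub_eq_C_mul_nodal {ι : Type*} [Fintype ι] (hP : P.Monic)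
    (hQ : Q.degree ≤ P.natDegree) {z : ι → F} (hz : Function.Injective z)
    (hcard : Fintype.card ι = P.natDegree + 1)
    (hfix : ∀ k, z k * (l * P.eval (z k) / Q.eval (z k)) = 1) :
    C l * X * P - Q = C l * nodal univ z := by
  have hdeg : (C l * X * P - Q).degree ≤ ↑(P.natDegree + 1) := by
    refine (degree_sub_le _ _).trans (max_le ?_ (hQ.trans (by exact_mod_cast P.natDegree.le_succ)))
    calc (C l * X * P).degree ≤ (C l * X).degree + P.degree := degree_mul_le _ _
      _ ≤ 1 + P.natDegree := add_le_add (degree_C_mul_X_le l) degree_le_natDegree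
      _ = ↑(P.natDegree + 1) := by push_cast; ring
  have heval : ∀ k, (C l * X * P - Q).eval (z k) = 0 := by
    intro k
    have hQz : Q.eval (z k) ≠ 0 := fun h => by simpa [h] using hfix k
    have := hfix k
    field_simp at this
    simp only [eval_sub, eval_mul, eval_C, eval_X]
    linear_combination this
  have hcoeff : (C l * X * P - Q).coeff (P.natDegree + 1) = l := by
    rw [coeff_sub, mul_assoc, coeff_C_mul, coeff_X_mul, hP.coeff_natDegree,
      coeff_eq_zero_of_degree_lt (hQ.trans_lt (by exact_mod_cast P.natDegree.lt_succ_self))]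
    ring
  have := eq_C_mul_nodal_of_eval_eq_zero (s := univ) hz.injOn
    (by rwa [card_univ, hcard]) (fun k _ => heval k)
  rwa [card_univ, hcard, hcoeff] at this

theorem mul_div_sub_one_eq (hR : C l * X * P - Q = C l * R) {w : F} (hQw : Q.eval w ≠ 0) :
    w * (l * P.eval w / Q.eval w) - 1 = l * R.eval w / Q.eval w := by
  have := congrArg (eval w) hR
  simp only [eval_sub, eval_mul, eval_C, eval_X] at this
  field_simp
  linear_combination this

theorem div_mul_div_sub_one_eq (hR : C l * X * P - Q = C l * R) (hl : l ≠ 0) {w : F}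
    (hQw : Q.eval w ≠ 0) :
    (l * P.eval w / Q.eval w) / (w * (l * P.eval w / Q.eval w) - 1) = P.eval w / R.eval w := by
  rw [mul_div_sub_one_eq hR hQw, div_div_div_cancel_right₀ hQw, mul_div_mul_left _ _ hl]

end RationalFixedPoints

section RationalDerivative

variable {𝕜 : Type*} [NontriviallyNormedField 𝕜] {l : 𝕜} {P Q R : 𝕜[X]} {φ : 𝕜 → 𝕜}

theorem apply_add_mul_deriv_eq (hφ : φ = fun w => l * P.eval w / Q.eval w)
    (hR : C l * X * P - Q = C l * R) {w : 𝕜} (hQw : Q.eval w ≠ 0) (hRw : R.eval w = 0) :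
    φ w + w * deriv φ w = l * (derivative R).eval w / Q.eval w := by
  have hφw : DifferentiableAt 𝕜 φ w := by
    rw [hφ]; exact (((P.hasDerivAt w).const_mul l).fun_div (Q.hasDerivAt w) hQw).differentiableAt
  have hleft : HasDerivAt (fun u => u * φ u - 1) (1 * φ w + w * deriv φ w) w :=
    ((hasDerivAt_id w).mul hφw.hasDerivAt).sub_const 1
  have hright := ((R.hasDerivAt w).const_mul l).fun_div (Q.hasDerivAt w) hQw
  have hnear : (fun u => u * φ u - 1) =ᶠ[nhds w] fun u => l * R.eval u / Q.eval u :=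
    (Q.continuousAt.eventually_ne hQw).mono fun u hu => by simp only [hφ, mul_div_sub_one_eq hR hu]
  rw [one_mul] at hleft
  rw [hleft.unique (hright.congr_of_eventuallyEq hnear), hRw]
  field_simp
  ring

theorem apply_div_apply_add_mul_deriv_eq {ι : Type*} [DecidableEq ι] {s : Finset ι} {v : ι → 𝕜}
    (hφ : φ = fun w => l * P.eval w / Q.eval w) (hR : C l * X * P - Q = C l * nodal s v)
    (hl : l ≠ 0) {i : ι} (hi : i ∈ s) (hQ : Q.eval (v i) ≠ 0) :
    φ (v i) / (φ (v i) + v i * deriv φ (v i))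
      = P.eval (v i) / ∏ j ∈ s.erase i, (v i - v j) := by
  rw [apply_add_mul_deriv_eq hφ hR hQ (eval_nodal_at_node hi), hφ, div_div_div_cancel_right₀ hQ,
    mul_div_mul_left _ _ hl, eval_nodal_derivative_eval_node_eq hi, eval_nodal]

end RationalDerivative

theorem one_sub_conj_mul_ne_zero_s8 {c ζ : ℂ} (hc : ‖c‖ < 1) (hζ : ‖ζ‖ ≤ 1) : 1 - conj c * ζ ≠ 0 := by
  have hlt : ‖conj c * ζ‖ < 1 := by
    rw [norm_mul, Complex.norm_conj]
    exact mul_lt_one_of_nonneg_of_lt_one_left (norm_nonneg _) hc hζ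
  rw [sub_ne_zero]
  rintro h
  rw [← h, norm_one] at hlt
  exact lt_irrefl _ hlt

theorem sub_ne_zero_of_norm_lt_one {c ζ : ℂ} (hc : ‖c‖ < 1) (hζ : ‖ζ‖ = 1) : ζ - c ≠ 0 := by
  rw [sub_ne_zero]
  rintro rfl
  exact hc.ne hζ

theorem mul_logDeriv_mobius {c ζ : ℂ} (hc : ‖c‖ < 1) (hζ : ‖ζ‖ = 1) :
    ζ * logDeriv (fun w => (w - c) / (1 - conj c * w)) ζ
      = ((1 - ‖c‖ ^ 2) / ‖ζ - c‖ ^ 2 : ℝ) := by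
  have hζc := sub_ne_zero_of_norm_lt_one hc hζ
  have hden := one_sub_conj_mul_ne_zero_s8 hc hζ.le
  have hζζ : ζ * conj ζ = 1 := by rw [mul_conj', hζ]; norm_num
  rw [logDeriv_div ζ hζc hden (by fun_prop) (by fun_prop)]
  have h1 : deriv (fun w => w - c) ζ = 1 := by simp
  have h2 : deriv (fun w => 1 - conj c * w) ζ = - conj c := by simp
  rw [logDeriv_apply, logDeriv_apply, h1, h2]
  have hnorm : ((‖ζ - c‖ ^ 2 : ℝ) : ℂ) = (ζ - c) * conj (ζ - c) := by rw [mul_conj']; norm_cast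
  have hnormc : ((‖c‖ ^ 2 : ℝ) : ℂ) = c * conj c := by rw [mul_conj']; norm_cast
  have hconj : conj ζ - conj c ≠ 0 := by rw [← map_sub]; exact (_root_.map_ne_zero _).mpr hζc
  have hζ0 : ζ ≠ 0 := norm_ne_zero_iff.mp (by rw [hζ]; exact one_ne_zero)
  have hden' : 1 - conj c * ζ = ζ * (conj ζ - conj c) := by linear_combination -hζζ
  rw [Complex.ofReal_div, Complex.ofReal_sub, Complex.ofReal_one, hnorm, hnormc, map_sub, hden']
  field_simp
  linear_combination hζζ

theorem div_add_mul_deriv_eq_inv {𝕜 : Type*} [NontriviallyNormedField 𝕜] {f : 𝕜 → 𝕜} {x : 𝕜}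
    (hf : f x ≠ 0) : f x / (f x + x * deriv f x) = (1 + x * logDeriv f x)⁻¹ := by
  rw [logDeriv_apply, mul_div_assoc', one_add_div hf, inv_div]

section Blaschke

variable {ι : Type*} [Fintype ι] {l : ℂ} {b : ι → ℂ}

theorem mul_logDeriv_blaschke (hl : l ≠ 0) (hb : ∀ i, ‖b i‖ < 1) {ζ : ℂ} (hζ : ‖ζ‖ = 1) :
    ζ * logDeriv (fun w => l * ∏ i, (w - b i) / (1 - conj (b i) * w)) ζ
      = ((∑ i, (1 - ‖b i‖ ^ 2) / ‖ζ - b i‖ ^ 2 : ℝ) : ℂ) := by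
  rw [logDeriv_const_mul ζ l hl, logDeriv_prod, mul_sum, Complex.ofReal_sum]
  · exact sum_congr rfl fun i _ => mul_logDeriv_mobius (hb i) hζ
  · exact fun i _ => div_ne_zero (sub_ne_zero_of_norm_lt_one (hb i) hζ)
      (one_sub_conj_mul_ne_zero_s8 (hb i) hζ.le)
  · exact fun i _ => by
      have := one_sub_conj_mul_ne_zero_s8 (hb i) hζ.le
      fun_prop (disch := assumption)

theorem exists_real_div_add_mul_deriv_blaschke [Nonempty ι] (hl : l ≠ 0) (hb : ∀ i, ‖b i‖ < 1)
    {φ : ℂ → ℂ} (hφ : φ = fun w => l * ∏ i, (w - b i) / (1 - conj (b i) * w))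
    {ζ : ℂ} (hζ : ‖ζ‖ = 1) :
    ∃ t : ℝ, 0 < t ∧ t < 1 ∧ φ ζ / (φ ζ + ζ * deriv φ ζ) = t := by
  set s := ∑ i, (1 - ‖b i‖ ^ 2) / ‖ζ - b i‖ ^ 2
  have hs : 0 < s := sum_pos (fun i _ => div_pos
      (sub_pos.mpr (pow_lt_one₀ (norm_nonneg _) (hb i) two_ne_zero))
      (pow_pos (norm_pos_iff.mpr (sub_ne_zero_of_norm_lt_one (hb i) hζ)) 2)) univ_nonempty
  have hφζ : φ ζ ≠ 0 := by
    rw [hφ]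
    exact mul_ne_zero hl (prod_ne_zero_iff.mpr fun i _ => div_ne_zero
      (sub_ne_zero_of_norm_lt_one (hb i) hζ) (one_sub_conj_mul_ne_zero_s8 (hb i) hζ.le))
  refine ⟨(1 + s)⁻¹, by positivity, inv_lt_one_of_one_lt₀ (by linarith), ?_⟩
  rw [div_add_mul_deriv_eq_inv hφζ, hφ, mul_logDeriv_blaschke hl hb hζ]
  rw [Complex.ofReal_inv, Complex.ofReal_add, Complex.ofReal_one]

noncomputable def blaschkeDenom (b : ι → ℂ) : ℂ[X] := ∏ i, (1 - C (conj (b i)) * X)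

theorem eval_blaschkeDenom (w : ℂ) : (blaschkeDenom b).eval w = ∏ i, (1 - conj (b i) * w) := by
  simp [blaschkeDenom, eval_prod]

theorem degree_blaschkeDenom_le : (blaschkeDenom b).degree ≤ Fintype.card ι := by
  refine degree_le_of_natDegree_le ((natDegree_prod_le _ _).trans ?_)
  refine (sum_le_sum fun i _ => (natDegree_sub_le _ _).trans (max_le (by simp)
    ((natDegree_C_mul_le _ _).trans natDegree_X_le))).trans ?_
  simp

theorem blaschke_eq_div (l : ℂ) (b : ι → ℂ) :
    (fun w => l * ∏ i, (w - b i) / (1 - conj (b i) * w))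
      = fun w => l * (nodal univ b).eval w / (blaschkeDenom b).eval w := by
  ext w
  rw [eval_nodal, eval_blaschkeDenom, prod_div_distrib, mul_div_assoc]

theorem C_mul_X_mul_nodal_sub_blaschkeDenom {κ : Type*} [Fintype κ] {z : κ → ℂ}
    (hz : Function.Injective z) (hcard : Fintype.card κ = Fintype.card ι + 1)
    (hfix : ∀ k, z k * (l * (nodal univ b).eval (z k) / (blaschkeDenom b).eval (z k)) = 1) :
    C l * X * nodal univ b - blaschkeDenom b = C l * nodal univ z :=
  C_mul_X_mul_sub_eq_C_mul_nodal nodal_monic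
    (by simpa [natDegree_nodal] using degree_blaschkeDenom_le (b := b)) hz
    (by simpa [natDegree_nodal] using hcard) hfix

end Blaschke

theorem stmt8 (m : ℕ) (hm : 1 ≤ m) (φ : ℂ → ℂ) (hφ : IsBlaschke m φ)
    (z : Fin (m + 1) → ℂ) (hz : Function.Injective z)
    (hzT : ∀ k, ‖z k‖ = 1)
    (hfix : ∀ k, z k * φ (z k) = 1) :
    (∀ k, (φ (z k) / (φ (z k) + z k * deriv φ (z k))).im = 0 ∧
      0 < (φ (z k) / (φ (z k) + z k * deriv φ (z k))).re ∧
      (φ (z k) / (φ (z k) + z k * deriv φ (z k))).re < 1) ∧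
    (∑ k, φ (z k) / (φ (z k) + z k * deriv φ (z k))) = 1 ∧
    ∀ w ∈ ball (0:ℂ) 1,
      φ w / (w * φ w - 1)
        = ∑ k, (φ (z k) / (φ (z k) + z k * deriv φ (z k))) / (w - z k) := by
  obtain ⟨l, b, hl, hb, hφ⟩ := hφ
  have hl0 : l ≠ 0 := norm_ne_zero_iff.mp (by rw [hl]; exact one_ne_zero)
  have hb1 : ∀ i, ‖b i‖ < 1 := fun i => mem_ball_zero_iff.mp (hb i)
  have hφPQ := hφ.trans (blaschke_eq_div l b)
  have hQ : ∀ w : ℂ, ‖w‖ ≤ 1 → (blaschkeDenom b).eval w ≠ 0 := fun w hw => by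
    rw [eval_blaschkeDenom]
    exact prod_ne_zero_iff.mpr fun i _ => one_sub_conj_mul_ne_zero_s8 (hb1 i) hw
  have hR : C l * X * nodal univ b - blaschkeDenom b = C l * nodal univ z :=
    C_mul_X_mul_nodal_sub_blaschkeDenom hz (by simp) fun k => by simpa [hφPQ] using hfix k
  have ht : ∀ k, φ (z k) / (φ (z k) + z k * deriv φ (z k))
      = (nodal univ b).eval (z k) / ∏ j ∈ univ.erase k, (z k - z j) := fun k =>
    apply_div_apply_add_mul_deriv_eq hφPQ hR hl0 (mem_univ k) (hQ _ (hzT k).le)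
  have hdeg : (nodal univ b).degree < #(univ : Finset (Fin (m + 1))) := by
    rw [degree_nodal, card_univ, card_univ, Fintype.card_fin, Fintype.card_fin]
    exact_mod_cast m.lt_succ_self
  refine ⟨fun k => ?_, ?_, fun w hw => ?_⟩
  · have : Nonempty (Fin m) := ⟨⟨0, hm⟩⟩
    obtain ⟨t, ht0, ht1, heq⟩ := exists_real_div_add_mul_deriv_blaschke hl0 hb1 hφ (hzT k)
    simp [heq, ht0, ht1]
  · have hcoeff : (nodal univ b).coeff m = 1 := by
      simpa [natDegree_nodal] using (nodal_monic (s := univ) (v := b)).coeff_natDegree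
    simp_rw [ht]
    rw [← coeff_eq_sum hz.injOn hdeg, card_univ, Fintype.card_fin, Nat.add_sub_cancel, hcoeff]
  · have hw1 := mem_ball_zero_iff.mp hw
    have hwz : ∀ k ∈ univ, w ≠ z k := fun k _ h => hw1.ne (h ▸ hzT k)
    simp_rw [ht]
    rw [hφPQ, div_mul_div_sub_one_eq hR hl0 (hQ w hw1.le),
      eval_div_eval_nodal_eq_sum hz.injOn hdeg hwz]
end

section
/- Let α ∈ (0, 3] and let f ∈ F(α). Then the pre-Schwarzian norm of f satisfies ‖P_f‖ = sup_{z∈𝔻} (1 − |z|²)·|f''(z)/f'(z)| ≤ 2α. -/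
open Complex Metric

/-!
The hypothesis says that `u z = -z f''(z)/f'(z)` has real part below `α/2`, and `u 0 = 0`, so the
Borel–Carathéodory theorem gives `|z| |f''/f'| ≤ α|z|/(1 - |z|)`. Hence `|f''/f'| ≤ α/(1 - |z|)`
off `0`, also at `0` by continuity, and `(1 - |z|²) α/(1 - |z|) = α (1 + |z|) ≤ 2α`.
-/

open Filter Topology

lemma le_of_continuousAt_of_eventually_punctured_le {X : Type*} [TopologicalSpace X] {x : X}
    [(𝓝[≠] x).NeBot] {f g : X → ℝ} (hf : ContinuousAt f x) (hg : ContinuousAt g x)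
    (hle : ∀ᶠ y in 𝓝[≠] x, f y ≤ g y) : f x ≤ g x :=
  le_of_tendsto_of_tendsto (hf.tendsto.mono_left nhdsWithin_le_nhds)
    (hg.tendsto.mono_left nhdsWithin_le_nhds) hle

lemma MemF.pos {α : ℝ} {f : ℂ → ℂ} (hF : MemF α f) : 0 < α := by
  simpa using hF.2.2.2.2 0 (mem_ball_self one_pos)

lemma MemF.analyticOnNhd_deriv {α : ℝ} {f : ℂ → ℂ} (hF : MemF α f) :
    AnalyticOnNhd ℂ (deriv f) (ball 0 1) :=
  (hF.1.analyticOnNhd isOpen_ball).deriv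

lemma MemF.norm_mul_preSchwarzian_le {α : ℝ} {f : ℂ → ℂ} (hF : MemF α f) {z : ℂ}
    (hz : z ∈ ball (0 : ℂ) 1) :
    ‖z‖ * ‖deriv (deriv f) z / deriv f z‖ ≤ ‖z‖ * (α / (1 - ‖z‖)) := by
  have hA := hF.analyticOnNhd_deriv
  have hbound := borelCaratheodory_zero (f := fun z ↦ -(z * (deriv (deriv f) z / deriv f z)))
    (M := α / 2) (half_pos hF.pos)
    (differentiableOn_id.mul (hA.deriv.differentiableOn.div hA.differentiableOn hF.2.2.2.1)).neg
    (fun z hz ↦ by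
      have := hF.2.2.2.2 z hz
      rw [add_re, one_re] at this
      show (-(z * (deriv (deriv f) z / deriv f z))).re ≤ α / 2
      rw [neg_re, ← mul_div_assoc]
      linarith)
    one_pos hz (by simp)
  rw [norm_neg, norm_mul] at hbound
  convert hbound using 1
  ring

lemma MemF.norm_preSchwarzian_le {α : ℝ} {f : ℂ → ℂ} (hF : MemF α f) {z : ℂ}
    (hz : z ∈ ball (0 : ℂ) 1) : ‖deriv (deriv f) z / deriv f z‖ ≤ α / (1 - ‖z‖) := by
  have hoff : ∀ z ∈ ball (0 : ℂ) 1, z ≠ 0 →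
      ‖deriv (deriv f) z / deriv f z‖ ≤ α / (1 - ‖z‖) :=
    fun z hz hz0 ↦ le_of_mul_le_mul_left (hF.norm_mul_preSchwarzian_le hz) (norm_pos_iff.2 hz0)
  rcases eq_or_ne z 0 with rfl | hz0
  · have hA := hF.analyticOnNhd_deriv
    have h0 : (0 : ℂ) ∈ ball (0 : ℂ) 1 := mem_ball_self one_pos
    refine le_of_continuousAt_of_eventually_punctured_le
      ((hA.deriv 0 h0).continuousAt.div (hA 0 h0).continuousAt (hF.2.2.2.1 0 h0)).norm
      (continuousAt_const.div (continuousAt_const.sub continuous_norm.continuousAt) (by simp)) ?_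
    filter_upwards [self_mem_nhdsWithin, nhdsWithin_le_nhds (ball_mem_nhds 0 one_pos)]
      with y hy hyb using hoff y hyb hy
  · exact hoff z hz hz0

theorem stmt12_general (α : ℝ) (f : ℂ → ℂ) (hF : MemF α f) :
    ∀ z ∈ ball (0:ℂ) 1,
      (1 - ‖z‖ ^ 2) * ‖deriv (deriv f) z / deriv f z‖ ≤ 2 * α := by
  intro z hz
  have hz1 : ‖z‖ < 1 := mem_ball_zero_iff.1 hz
  calc (1 - ‖z‖ ^ 2) * ‖deriv (deriv f) z / deriv f z‖
      ≤ (1 - ‖z‖ ^ 2) * (α / (1 - ‖z‖)) := by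
        gcongr
        · nlinarith [norm_nonneg z]
        · exact hF.norm_preSchwarzian_le hz
    _ = α * (1 + ‖z‖) := by field_simp [(sub_pos.2 hz1).ne']; ring
    _ ≤ 2 * α := by nlinarith [hF.pos]

theorem stmt12 (α : ℝ) (hα : α ∈ Set.Ioc (0:ℝ) 3) (f : ℂ → ℂ) (hF : MemF α f) :
    ∀ z ∈ ball (0:ℂ) 1,
      (1 - ‖z‖ ^ 2) * ‖deriv (deriv f) z / deriv f z‖ ≤ 2 * α :=
  stmt12_general α f hF
end

section
/- Let α ∈ (0, 3]. The bound 2α + 1 for the harmonic pre-Schwarzian norm is best possible: for every ε > 0 there exists t ∈ (0, 1) such that, taking h analytic on 𝔻 with h(0) = 0 and h'(z) = (1 − z)^{−α}, and ω_t(z) = (z − t)/(1 − tz), one has sup_{z∈𝔻} (1 − |z|²)·|h''(z)/h'(z) − conj(ω_t(z))·ω_t'(z)/(1 − |ω_t(z)|²)| ≥ 2α + 1 − ε. -/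
/-!
Since `h' = (1 - z)^(-α)`, `h''/h' = α/(1 - z)`. For real `t`, the Möbius map attains equality in
Schwarz–Pick, `1 - |ω_t z|² = (1 - t²)(1 - |z|²)/|1 - tz|²`, so the weighted pre-Schwarzian
collapses to `α(1 - |z|²)/(1 - z) - conj(z - t)/(1 - tz)`. This is bounded by `2|α| + 1`, so the
supremum is a genuine one, and at a real point `x` it equals `α(1 + x) + (t - x)/(1 - tx)`.
Letting first `x → 1⁻` and then `t → 1⁻` brings this value arbitrarily close to `2α + 1`.
-/

open Complex ComplexConjugate Metric Filter Topology

lemma one_sub_ne_zero_of_norm_lt_one {w : ℂ} (hw : ‖w‖ < 1) : 1 - w ≠ 0 :=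
  sub_ne_zero.mpr fun h => by simp [← h] at hw

lemma norm_ofReal_mul_lt_one {t : ℝ} (ht : |t| < 1) {z : ℂ} (hz : ‖z‖ < 1) : ‖(t : ℂ) * z‖ < 1 := by
  rw [norm_mul, norm_real, Real.norm_eq_abs]
  exact mul_lt_one_of_nonneg_of_lt_one_left (abs_nonneg t) ht hz.le

lemma hasDerivAt_mobius (t z : ℂ) (hz : 1 - t * z ≠ 0) :
    HasDerivAt (fun w => (w - t) / (1 - t * w)) ((1 - t ^ 2) / (1 - t * z) ^ 2) z := by
  have hnum : HasDerivAt (fun w : ℂ => w - t) 1 z := (hasDerivAt_id z).sub_const t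
  have hden : HasDerivAt (fun w : ℂ => 1 - t * w) (-t) z := by
    simpa using ((hasDerivAt_id z).const_mul t).const_sub 1
  refine (hnum.div hden hz).congr_deriv ?_
  ring

lemma deriv_div_eq_of_deriv_eq_one_sub_cpow {h : ℂ → ℂ} {c : ℂ}
    (hd : ∀ z ∈ ball (0 : ℂ) 1, deriv h z = (1 - z) ^ (-c)) {z : ℂ} (hz : z ∈ ball (0 : ℂ) 1) :
    deriv (deriv h) z / deriv h z = c / (1 - z) := by
  have hz' : ‖z‖ < 1 := mem_ball_zero_iff.mp hz
  have hne : 1 - z ≠ 0 := one_sub_ne_zero_of_norm_lt_one hz'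
  have hslit : 1 - z ∈ slitPlane := by
    simpa [sub_eq_add_neg] using mem_slitPlane_of_norm_lt_one (z := -z) (by rwa [norm_neg])
  have hev : deriv h =ᶠ[𝓝 z] fun w => (1 - w) ^ (-c) :=
    eventually_of_mem (isOpen_ball.mem_nhds hz) hd
  have hpow : HasDerivAt (fun w => (1 - w) ^ (-c)) (c * (1 - z) ^ (-c - 1)) z := by
    convert ((hasDerivAt_id' z).const_sub 1).cpow_const (c := -c) hslit using 1
    ring
  rw [hev.deriv_eq, hpow.deriv, hd z hz, cpow_sub _ _ hne, cpow_one]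
  have hpow0 : (1 - z) ^ (-c) ≠ 0 := fun h0 => hne ((cpow_eq_zero_iff _ _).mp h0).1
  field_simp

lemma one_sub_norm_mobius_sq (t : ℝ) (z : ℂ) (hz : 1 - (t : ℂ) * z ≠ 0) :
    1 - ‖(z - t) / (1 - t * z)‖ ^ 2 = (1 - t ^ 2) * (1 - ‖z‖ ^ 2) / ‖1 - (t : ℂ) * z‖ ^ 2 := by
  have hpos : 0 < ‖1 - (t : ℂ) * z‖ ^ 2 := by positivity
  rw [norm_div, div_pow, eq_div_iff hpos.ne', sub_mul, div_mul_cancel₀ _ hpos.ne']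
  simp only [Complex.sq_norm, normSq_apply, sub_re, sub_im, mul_re, mul_im, one_re, one_im, ofReal_re,
    ofReal_im]
  ring

lemma norm_mobius_lt_one {t : ℝ} (ht : |t| < 1) {z : ℂ} (hz : ‖z‖ < 1) :
    ‖(z - t) / (1 - t * z)‖ < 1 := by
  have hden := one_sub_ne_zero_of_norm_lt_one (norm_ofReal_mul_lt_one ht hz)
  have key := one_sub_norm_mobius_sq t z hden
  have ht2 : 0 < 1 - t ^ 2 := by nlinarith [sq_abs t, abs_nonneg t]
  have hz2 : 0 < 1 - ‖z‖ ^ 2 := by nlinarith [norm_nonneg z]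
  have : 0 < 1 - ‖(z - t) / (1 - t * z)‖ ^ 2 := by rw [key]; positivity
  nlinarith [norm_nonneg ((z - t) / (1 - t * z))]

lemma mobius_term_eq {t : ℝ} (ht : |t| < 1) {z : ℂ} (hz : ‖z‖ < 1) :
    conj ((z - t) / (1 - t * z)) * ((1 - t ^ 2) / (1 - t * z) ^ 2) /
        ((1 - ‖(z - t) / (1 - t * z)‖ ^ 2 : ℝ) : ℂ) =
      conj (z - t) / ((1 - t * z) * ((1 - ‖z‖ ^ 2 : ℝ) : ℂ)) := by
  have hden := one_sub_ne_zero_of_norm_lt_one (norm_ofReal_mul_lt_one ht hz)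
  have ht2 : (1 - t ^ 2 : ℂ) ≠ 0 := by
    exact_mod_cast (show (0 : ℝ) < 1 - t ^ 2 by nlinarith [sq_abs t, abs_nonneg t]).ne'
  have hz2 : ((1 - ‖z‖ ^ 2 : ℝ) : ℂ) ≠ 0 := by
    exact_mod_cast (show (0 : ℝ) < 1 - ‖z‖ ^ 2 by nlinarith [norm_nonneg z]).ne'
  have hden' : conj (1 - (t : ℂ) * z) ≠ 0 := (map_ne_zero _).mpr hden
  rw [one_sub_norm_mobius_sq t z hden, map_div₀]
  set u := 1 - (t : ℂ) * z
  set r := 1 - ‖z‖ ^ 2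
  push_cast
  rw [← mul_conj' u]
  field_simp

lemma weighted_preSchwarzian_eq {h : ℂ → ℂ} {c : ℂ}
    (hd : ∀ z ∈ ball (0 : ℂ) 1, deriv h z = (1 - z) ^ (-c)) {t : ℝ} (ht : |t| < 1) {z : ℂ}
    (hz : z ∈ ball (0 : ℂ) 1) :
    (1 - ‖z‖ ^ 2) *
        ‖deriv (deriv h) z / deriv h z -
          conj ((z - t) / (1 - t * z)) * deriv (fun w => (w - (t : ℂ)) / (1 - t * w)) z /
            ((1 - ‖(z - t) / (1 - t * z)‖ ^ 2 : ℝ) : ℂ)‖ =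
      ‖c * ((1 - ‖z‖ ^ 2 : ℝ) : ℂ) / (1 - z) - conj (z - t) / (1 - t * z)‖ := by
  have hz' : ‖z‖ < 1 := mem_ball_zero_iff.mp hz
  have hden := one_sub_ne_zero_of_norm_lt_one (norm_ofReal_mul_lt_one ht hz')
  have hz2 : 0 < 1 - ‖z‖ ^ 2 := by nlinarith [norm_nonneg z]
  have hz2' : ((1 - ‖z‖ ^ 2 : ℝ) : ℂ) ≠ 0 := by exact_mod_cast hz2.ne'
  rw [deriv_div_eq_of_deriv_eq_one_sub_cpow hd hz, (hasDerivAt_mobius _ z hden).deriv,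
    mobius_term_eq ht hz']
  set r := 1 - ‖z‖ ^ 2
  rw [show c * (r : ℂ) / (1 - z) - conj (z - t) / (1 - t * z) =
      r * (c / (1 - z) - conj (z - t) / ((1 - t * z) * r)) by field_simp,
    norm_mul, norm_real, Real.norm_eq_abs, abs_of_pos hz2]

lemma norm_one_sub_sq_div_le {z : ℂ} (hz : ‖z‖ < 1) : ‖((1 - ‖z‖ ^ 2 : ℝ) : ℂ) / (1 - z)‖ ≤ 2 := by
  have hne := one_sub_ne_zero_of_norm_lt_one hz
  have hle : 1 - ‖z‖ ≤ ‖1 - z‖ := by simpa using norm_sub_norm_le (1 : ℂ) z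
  rw [norm_div, norm_real, Real.norm_eq_abs, abs_of_pos (by nlinarith [norm_nonneg z]),
    div_le_iff₀ (norm_pos_iff.mpr hne)]
  nlinarith [norm_nonneg z]

lemma norm_weighted_preSchwarzian_le (c : ℂ) {t : ℝ} (ht : |t| < 1) {z : ℂ} (hz : ‖z‖ < 1) :
    ‖c * ((1 - ‖z‖ ^ 2 : ℝ) : ℂ) / (1 - z) - conj (z - t) / (1 - t * z)‖ ≤ 2 * ‖c‖ + 1 := by
  have hmob : ‖conj (z - t) / (1 - t * z)‖ < 1 := by
    rw [norm_div, Complex.norm_conj, ← norm_div]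
    exact norm_mobius_lt_one ht hz
  calc _ ≤ ‖c‖ * ‖((1 - ‖z‖ ^ 2 : ℝ) : ℂ) / (1 - z)‖ + ‖conj (z - t) / (1 - t * z)‖ := by
        rw [mul_div_assoc, ← norm_mul]
        exact norm_sub_le _ _
    _ ≤ 2 * ‖c‖ + 1 := by nlinarith [norm_one_sub_sq_div_le hz, norm_nonneg c]

lemma weighted_preSchwarzian_ofReal (α t x : ℝ) (hx : x ≠ 1) :
    (α : ℂ) * ((1 - ‖(x : ℂ)‖ ^ 2 : ℝ) : ℂ) / (1 - x) - conj ((x : ℂ) - t) / (1 - t * x) =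
      ((α * (1 + x) - (x - t) / (1 - t * x) : ℝ) : ℂ) := by
  have hx' : (1 - x : ℂ) ≠ 0 := sub_ne_zero.mpr (by exact_mod_cast hx.symm)
  have hconj : conj ((x : ℂ) - t) = x - t := by rw [map_sub, conj_ofReal, conj_ofReal]
  rw [hconj, norm_real, Real.norm_eq_abs, sq_abs]
  push_cast
  field_simp
  ring

lemma exists_near_extremal (α : ℝ) {ε : ℝ} (hε : 0 < ε) :
    ∃ x ∈ Set.Ioo (0 : ℝ) 1, ∃ t ∈ Set.Ioo (0 : ℝ) 1,
      2 * α + 1 - ε < α * (1 + x) - (x - t) / (1 - t * x) := by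
  have hlin : Tendsto (fun x : ℝ => α * (1 + x)) (𝓝[<] 1) (𝓝 (2 * α)) := by
    have := ((by fun_prop : Continuous fun x : ℝ => α * (1 + x)).tendsto 1).mono_left
      (nhdsWithin_le_nhds : 𝓝[<] (1 : ℝ) ≤ 𝓝 1)
    rwa [show α * (1 + 1) = 2 * α by ring] at this
  obtain ⟨x, hαx, hx⟩ :=
    ((hlin.eventually_const_lt (by linarith : 2 * α - ε / 2 < 2 * α)).and
      (Ioo_mem_nhdsLT one_pos)).exists
  have hx1 : 1 - x ≠ 0 := by linarith [hx.2]
  have hmob : Tendsto (fun t : ℝ => (x - t) / (1 - t * x)) (𝓝[<] 1) (𝓝 (-1)) := by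
    have hcont : ContinuousAt (fun t : ℝ => (x - t) / (1 - t * x)) 1 :=
      (continuousAt_const.sub continuousAt_id).div
        (continuousAt_const.sub (continuousAt_id.mul continuousAt_const)) (by simpa using hx1)
    have := hcont.tendsto.mono_left (nhdsWithin_le_nhds : 𝓝[<] (1 : ℝ) ≤ 𝓝 1)
    rwa [one_mul, ← neg_sub, neg_div, div_self hx1] at this
  obtain ⟨t, hxt, ht⟩ :=
    ((hmob.eventually_lt_const (by linarith : -1 < -1 + ε / 2)).and
      (Ioo_mem_nhdsLT one_pos)).exists
  exact ⟨x, hx, t, ht, by linarith⟩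

theorem stmt17_general (α : ℝ) (ε : ℝ) (hε : 0 < ε)
    (h : ℂ → ℂ)
    (hd : ∀ z ∈ ball (0:ℂ) 1, deriv h z = (1 - z) ^ (-(α : ℂ))) :
    ∃ t ∈ Set.Ioo (0:ℝ) 1,
      2 * α + 1 - ε ≤
        ⨆ z : ball (0:ℂ) 1,
          (1 - ‖(z : ℂ)‖ ^ 2) *
            ‖(deriv (deriv h) (z : ℂ) / deriv h (z : ℂ) -
              (starRingEnd ℂ) (((z : ℂ) - (t : ℂ)) / (1 - (t : ℂ) * (z : ℂ))) *
                deriv (fun w => (w - (t : ℂ)) / (1 - (t : ℂ) * w)) (z : ℂ) /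
                  ((1 - ‖((z : ℂ) - (t : ℂ)) / (1 - (t : ℂ) * (z : ℂ))‖ ^ 2 : ℝ) : ℂ))‖ := by
  obtain ⟨x, hx, t, ht, hlt⟩ := exists_near_extremal α hε
  have ht' : |t| < 1 := abs_lt.mpr ⟨by linarith [ht.1], ht.2⟩
  have hxball : (x : ℂ) ∈ ball (0 : ℂ) 1 := by
    rw [mem_ball_zero_iff, norm_real, Real.norm_eq_abs, abs_of_pos hx.1]
    exact hx.2
  refine ⟨t, ht, ?_⟩
  refine le_trans ?_ (le_ciSup ⟨2 * ‖(α : ℂ)‖ + 1, ?_⟩ ⟨(x : ℂ), hxball⟩)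
  · rw [weighted_preSchwarzian_eq hd ht' hxball, weighted_preSchwarzian_ofReal α t x hx.2.ne,
      norm_real]
    exact hlt.le.trans (Real.le_norm_self _)
  · rintro _ ⟨⟨z, hz⟩, rfl⟩
    dsimp only
    rw [weighted_preSchwarzian_eq hd ht' hz]
    exact norm_weighted_preSchwarzian_le _ ht' (mem_ball_zero_iff.mp hz)

theorem stmt17 (α : ℝ) (hα : α ∈ Set.Ioc (0:ℝ) 3) (ε : ℝ) (hε : 0 < ε)
    (h : ℂ → ℂ) (hh : DifferentiableOn ℂ h (ball 0 1)) (h0 : h 0 = 0)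
    (hd : ∀ z ∈ ball (0:ℂ) 1, deriv h z = (1 - z) ^ (-(α : ℂ))) :
    ∃ t ∈ Set.Ioo (0:ℝ) 1,
      2 * α + 1 - ε ≤
        ⨆ z : ball (0:ℂ) 1,
          (1 - ‖(z : ℂ)‖ ^ 2) *
            ‖(deriv (deriv h) (z : ℂ) / deriv h (z : ℂ) -
              (starRingEnd ℂ) (((z : ℂ) - (t : ℂ)) / (1 - (t : ℂ) * (z : ℂ))) *
                deriv (fun w => (w - (t : ℂ)) / (1 - (t : ℂ) * w)) (z : ℂ) /
                  ((1 - ‖((z : ℂ) - (t : ℂ)) / (1 - (t : ℂ) * (z : ℂ))‖ ^ 2 : ℝ) : ℂ))‖ :=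
  stmt17_general α ε hε h hd
end
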